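/- arXiv:2604.27157 — 10 statements merged into one kernel-verified Lean document; each statement's English description precedes it below -/
import Mathlib

section
/- Lemma (decay for recursive inequalities on sparse graphs, Lemma 5.1, part 1). Let a directed graph on a countable vertex set V with distinguished vertex 0 be given, let r ≥ 1, and assume 𝒩 i ≠ ∅ for every vertex i such that i ∼ₖ 0 for some k ∈ {0,…,r−1}. Then there exist θ* ∈ (0,1) and γ^(r) ≥ 0, depending only on r and on the family of numbers (N_k^h), with the following property: for all families of nonnegative reals (Aⁱ)_{i∈V}, (Bⁱ)_{i∈V} and positive reals (αᵢ), (βᵢ), (α′ᵢ), (β′ᵢ) satisfying αᵢ·Aⁱ + βᵢ·Bⁱ ≤ α′ᵢ·∑_{j∈𝒩 i} Aʲ + β′ᵢ·∑_{j∈𝒩 i} Bʲ for every i with i ∼ₖ 0 for some k ∈ {0,…,r−1}, if γ := sup over such i of max( α′ᵢ / (min_{j∈𝒩 i} αⱼ), β′ᵢ / (min_{j∈𝒩 i} βⱼ) ) satisfies γ ≤ θ*, then α₀·A⁰ + β₀·B⁰ ≤ γ^(r) · ∑_{i ∼ᵣ 0} (αᵢ·Aⁱ + βᵢ·Bⁱ).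 -/
/-- Auxiliary: a sum over a `biUnion` of a nonnegative function is at most the
double sum. -/
lemma sum_biUnion_le_double_sum {V : Type*} [DecidableEq V] (S : ℕ → Finset V)
    (f : V → ℝ) (hf : ∀ i, 0 ≤ f i) (n : ℕ) :
    ∑ x ∈ (Finset.range n).biUnion S, f x ≤ ∑ h ∈ Finset.range n, ∑ x ∈ S h, f x := by
  induction n with
  | zero => simp
  | succ n ih =>
    rw [Finset.range_add_one, Finset.biUnion_insert,
      Finset.sum_insert Finset.notMem_range_self]
    have h1 := Finset.sum_union_inter (f := f) (s₁ := S n)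
      (s₂ := (Finset.range n).biUnion S)
    have h2 : (0:ℝ) ≤ ∑ x ∈ S n ∩ (Finset.range n).biUnion S, f x :=
      Finset.sum_nonneg fun i _ => hf i
    linarith [ih]

/-- **Lemma 5.1, part 1** (decay for recursive inequalities on sparse graphs).
A directed graph on a countable vertex set `V` is given by finite neighbourhood
sets `𝒩 i` with `i ∉ 𝒩 i`; `z` is the distinguished vertex `0` and `S k` is the
distance-`k` sphere `𝒩₀^(k)`, characterised by `S 0 = {z}` and
`S (k+1) = (⋃_{j ∈ S k} 𝒩 j) \ ⋃_{h < k+1} S h`.  Assuming `𝒩 i ≠ ∅` for every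
`i` at distance `< r` from `z`, there exist `θ* ∈ (0,1)` and `γ⁽ʳ⁾ ≥ 0` such
that for all nonnegative `(Aⁱ), (Bⁱ)` and positive `(αᵢ), (βᵢ), (α'ᵢ), (β'ᵢ)`
with `αᵢ Aⁱ + βᵢ Bⁱ ≤ α'ᵢ ∑_{j∈𝒩 i} Aʲ + β'ᵢ ∑_{j∈𝒩 i} Bʲ` for all `i` at
distance `< r`, if `γ` bounds all the ratios `α'ᵢ / min_{j∈𝒩 i} αⱼ` and
`β'ᵢ / min_{j∈𝒩 i} βⱼ` (for those `i`) and `γ ≤ θ*`, then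
`α₀ A⁰ + β₀ B⁰ ≤ γ⁽ʳ⁾ ∑_{i ∼ᵣ 0} (αᵢ Aⁱ + βᵢ Bⁱ)`. -/
theorem stmt0 {V : Type*} [DecidableEq V] [Countable V]
    (𝒩 : V → Finset V) (hloop : ∀ i, i ∉ 𝒩 i)
    (z : V) (S : ℕ → Finset V) (hS0 : S 0 = {z})
    (hS : ∀ k, S (k + 1) = ((S k).biUnion 𝒩) \ ((Finset.range (k + 1)).biUnion S))
    (r : ℕ) (hr : 1 ≤ r)
    (hne : ∀ k, k < r → ∀ i ∈ S k, (𝒩 i).Nonempty) :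
    ∃ θstar : ℝ, θstar ∈ Set.Ioo (0 : ℝ) 1 ∧ ∃ γr : ℝ, 0 ≤ γr ∧
      ∀ (A B α β α' β' : V → ℝ),
        (∀ i, 0 ≤ A i) → (∀ i, 0 ≤ B i) →
        (∀ i, 0 < α i) → (∀ i, 0 < β i) → (∀ i, 0 < α' i) → (∀ i, 0 < β' i) →
        (∀ k, k < r → ∀ i ∈ S k,
          α i * A i + β i * B i ≤
            α' i * ∑ j ∈ 𝒩 i, A j + β' i * ∑ j ∈ 𝒩 i, B j) →
        ∀ γ : ℝ,
          (∀ k, k < r → ∀ i ∈ S k, ∀ j ∈ 𝒩 i,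
            α' i ≤ γ * α j ∧ β' i ≤ γ * β j) →
          γ ≤ θstar →
          α z * A z + β z * B z ≤ γr * ∑ i ∈ S r, (α i * A i + β i * B i) := by
  classical
  -- N : total size of the spheres of radius < r
  set N : ℝ := ∑ h ∈ Finset.range r, ((S h).card : ℝ) with hN
  have hN0 : 0 ≤ N := Finset.sum_nonneg fun h _ => Nat.cast_nonneg _
  have hden : (0:ℝ) < 2 * (N + 1) := by linarith
  refine ⟨1 / (2 * (N + 1)), ⟨div_pos one_pos hden, by
    rw [div_lt_one hden]; linarith⟩, 1, zero_le_one, ?_⟩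
  intro A B α β α' β' hA hB hα hβ hα' hβ' hrec γ hγ hγθ
  set c : V → ℝ := fun i => α i * A i + β i * B i with hc
  have hcnn : ∀ i, 0 ≤ c i := fun i =>
    add_nonneg (mul_nonneg (hα i).le (hA i)) (mul_nonneg (hβ i).le (hB i))
  have hz0 : z ∈ S 0 := by rw [hS0]; exact Finset.mem_singleton_self z
  -- γ is positive
  have hγ0 : 0 < γ := by
    obtain ⟨j, hj⟩ := hne 0 hr z hz0
    have h1 := (hγ 0 hr z hz0 j hj).1
    have := hα' z
    nlinarith [hα j]
  -- key per-vertex inequality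
  have hkey : ∀ k, k < r → ∀ i ∈ S k, c i ≤ γ * ∑ j ∈ 𝒩 i, c j := by
    intro k hk i hi
    calc c i ≤ α' i * ∑ j ∈ 𝒩 i, A j + β' i * ∑ j ∈ 𝒩 i, B j := hrec k hk i hi
      _ = ∑ j ∈ 𝒩 i, (α' i * A j + β' i * B j) := by
          rw [Finset.mul_sum, Finset.mul_sum, ← Finset.sum_add_distrib]
      _ ≤ ∑ j ∈ 𝒩 i, (γ * α j * A j + γ * β j * B j) := by
          refine Finset.sum_le_sum fun j hj => ?_
          obtain ⟨h1, h2⟩ := hγ k hk i hi j hj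
          exact add_le_add (mul_le_mul_of_nonneg_right h1 (hA j))
            (mul_le_mul_of_nonneg_right h2 (hB j))
      _ = γ * ∑ j ∈ 𝒩 i, c j := by
          rw [Finset.mul_sum]; exact Finset.sum_congr rfl fun j _ => by ring
  -- neighbours of a vertex at distance k < r stay in the ball of radius r
  have hsub : ∀ k, k < r → ∀ i ∈ S k, 𝒩 i ⊆ (Finset.range (r + 1)).biUnion S := by
    intro k hk i hi j hj
    by_cases hmem : j ∈ (Finset.range (k + 1)).biUnion S
    · obtain ⟨h, hh, hjh⟩ := Finset.mem_biUnion.1 hmem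
      exact Finset.mem_biUnion.2 ⟨h, Finset.mem_range.2
        (lt_of_lt_of_le (Finset.mem_range.1 hh) (by omega)), hjh⟩
    · have : j ∈ S (k + 1) := by
        rw [hS k, Finset.mem_sdiff]
        exact ⟨Finset.mem_biUnion.2 ⟨i, hi, hj⟩, hmem⟩
      exact Finset.mem_biUnion.2 ⟨k + 1, Finset.mem_range.2 (by omega), this⟩
  -- SB : sum of c over the ball of radius r (as a double sum)
  set SB : ℝ := ∑ h ∈ Finset.range (r + 1), ∑ i ∈ S h, c i with hSB
  have hball : ∀ k, k < r → ∀ i ∈ S k, ∑ j ∈ 𝒩 i, c j ≤ SB := by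
    intro k hk i hi
    calc ∑ j ∈ 𝒩 i, c j
        ≤ ∑ j ∈ (Finset.range (r + 1)).biUnion S, c j :=
          Finset.sum_le_sum_of_subset_of_nonneg (hsub k hk i hi)
            (fun j _ _ => hcnn j)
      _ ≤ SB := sum_biUnion_le_double_sum S c hcnn (r + 1)
  -- SS : sum of c over the ball of radius r - 1
  set SS : ℝ := ∑ h ∈ Finset.range r, ∑ i ∈ S h, c i with hSS
  have hSSnn : 0 ≤ SS := Finset.sum_nonneg fun h _ =>
    Finset.sum_nonneg fun i _ => hcnn i
  have hSBnn : 0 ≤ SB := Finset.sum_nonneg fun h _ =>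
    Finset.sum_nonneg fun i _ => hcnn i
  have hT : SB = SS + ∑ i ∈ S r, c i := by
    rw [hSB, Finset.sum_range_succ]
  -- the main estimate: SS ≤ γ * N * SB
  have hmain : SS ≤ γ * N * SB := by
    calc SS ≤ ∑ h ∈ Finset.range r, ∑ i ∈ S h, γ * SB := by
          refine Finset.sum_le_sum fun h hh => Finset.sum_le_sum fun i hi => ?_
          calc c i ≤ γ * ∑ j ∈ 𝒩 i, c j := hkey h (Finset.mem_range.1 hh) i hi
            _ ≤ γ * SB := mul_le_mul_of_nonneg_left
                (hball h (Finset.mem_range.1 hh) i hi) hγ0.le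
      _ = γ * N * SB := by
          simp only [Finset.sum_const, nsmul_eq_mul]
          rw [← Finset.sum_mul, ← hN]; ring
  -- γ * N ≤ 1/2
  have hγN : γ * N ≤ 1 / 2 := by
    have : γ ≤ 1 / (2 * (N + 1)) := hγθ
    rw [le_div_iff₀ hden] at this
    nlinarith
  have hTnn : 0 ≤ ∑ i ∈ S r, c i := Finset.sum_nonneg fun i _ => hcnn i
  -- conclude SS ≤ ∑_{S r} c
  have hSST : SS ≤ ∑ i ∈ S r, c i := by nlinarith [hmain, hT, hSSnn, hTnn, hγN]
  -- c z ≤ SS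
  have hcz : c z ≤ SS := by
    have h1 : c z ≤ ∑ i ∈ S 0, c i := Finset.single_le_sum
      (fun i _ => hcnn i) hz0
    have h2 : ∑ i ∈ S 0, c i ≤ SS := Finset.single_le_sum
      (f := fun h => ∑ i ∈ S h, c i)
      (fun h _ => Finset.sum_nonneg fun i _ => hcnn i)
      (Finset.mem_range.2 hr)
    linarith
  calc α z * A z + β z * B z = c z := rfl
    _ ≤ ∑ i ∈ S r, c i := le_trans hcz hSST
    _ = 1 * ∑ i ∈ S r, (α i * A i + β i * B i) := by rw [one_mul]
end

section
/- Lemma (uniform exponential decay under bounded N_k^h, Lemma 5.1, part 2). Fix a real 𝔫 ≥ 1 and γ̄ ∈ (0,1). There exists θ* ∈ (0,1), depending only on 𝔫 and γ̄, with the following property: for every directed graph on a countable vertex set V with distinguished vertex 0 satisfying N_k^h ≤ 𝔫 for all h ∈ ℕ and all k ∈ V, for every r ≥ 1 with 𝒩 i ≠ ∅ whenever i ∼ₖ 0 for some k ∈ {0,…,r−1}, and for all families of nonnegative reals (Aⁱ), (Bⁱ) and positive reals (αᵢ), (βᵢ), (α′ᵢ), (β′ᵢ) satisfying αᵢ·Aⁱ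 + βᵢ·Bⁱ ≤ α′ᵢ·∑_{j∈𝒩 i} Aʲ + β′ᵢ·∑_{j∈𝒩 i} Bʲ for every i with i ∼ₖ 0 for some k ∈ {0,…,r−1}, if γ := sup over such i of max( α′ᵢ / (min_{j∈𝒩 i} αⱼ), β′ᵢ / (min_{j∈𝒩 i} βⱼ) ) satisfies γ ≤ θ*, then α₀·A⁰ + β₀·B⁰ ≤ γ̄^r · ∑_{i ∼ᵣ 0} (αᵢ·Aⁱ + βᵢ·Bⁱ). -/
/-- **Lemma 5.1, part 2** (uniform exponential decay under bounded `N_k^h`).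
Fix `𝔫 ≥ 1` and `γ̄ ∈ (0,1)`.  There exists `θ* ∈ (0,1)`, depending only on `𝔫`
and `γ̄`, such that for every directed graph (given by finite neighbourhoods
`𝒩 i` with `i ∉ 𝒩 i` on a countable vertex set, distinguished vertex `z`,
distance spheres `S k`) with `N_k^h = #{j ∈ S h : k ∈ 𝒩 j} ≤ 𝔫` for all `h, k`,
every `r ≥ 1` with `𝒩 i ≠ ∅` for all `i` at distance `< r`, and all data as in
Lemma 5.1, if the ratio bound `γ` satisfies `γ ≤ θ*` then
`α₀ A⁰ + β₀ B⁰ ≤ γ̄^r ∑_{i ∼ᵣ 0} (αᵢ Aⁱ + βᵢ Bⁱ)`. -/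
theorem stmt1 (n : ℝ) (hn : 1 ≤ n) (γbar : ℝ) (hγbar : γbar ∈ Set.Ioo (0 : ℝ) 1) :
    ∃ θstar : ℝ, θstar ∈ Set.Ioo (0 : ℝ) 1 ∧
      ∀ (V : Type) (_ : DecidableEq V) (_ : Countable V)
        (𝒩 : V → Finset V), (∀ i, i ∉ 𝒩 i) →
      ∀ (z : V) (S : ℕ → Finset V), S 0 = {z} →
        (∀ k, S (k + 1) = ((S k).biUnion 𝒩) \ ((Finset.range (k + 1)).biUnion S)) →
        (∀ (h : ℕ) (k : V), (((S h).filter fun j => k ∈ 𝒩 j).card : ℝ) ≤ n) →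
      ∀ r : ℕ, 1 ≤ r →
        (∀ k, k < r → ∀ i ∈ S k, (𝒩 i).Nonempty) →
      ∀ (A B α β α' β' : V → ℝ),
        (∀ i, 0 ≤ A i) → (∀ i, 0 ≤ B i) →
        (∀ i, 0 < α i) → (∀ i, 0 < β i) → (∀ i, 0 < α' i) → (∀ i, 0 < β' i) →
        (∀ k, k < r → ∀ i ∈ S k,
          α i * A i + β i * B i ≤
            α' i * ∑ j ∈ 𝒩 i, A j + β' i * ∑ j ∈ 𝒩 i, B j) →
        ∀ γ : ℝ,
          (∀ k, k < r → ∀ i ∈ S k, ∀ j ∈ 𝒩 i,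
            α' i ≤ γ * α j ∧ β' i ≤ γ * β j) →
          γ ≤ θstar →
          α z * A z + β z * B z ≤ γbar ^ r * ∑ i ∈ S r, (α i * A i + β i * B i) := by
  obtain ⟨hγb0, hγb1⟩ := hγbar
  have hn0 : (0:ℝ) < n := lt_of_lt_of_le one_pos hn
  refine ⟨γbar * (1 - γbar) / n, ⟨div_pos (mul_pos hγb0 (by linarith)) hn0, by rw [div_lt_one hn0]; nlinarith⟩, ?_⟩
  intro V _ _ 𝒩 hloop z S hS0 hSrec hN r hr hne A B α β α' β' hAnn hBnn hα hβ hα' hβ'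
    hmain γ hratio hγθ
  set g : V → ℝ := fun i => α i * A i + β i * B i with hg
  set F : ℕ → ℝ := fun k => ∑ i ∈ S k, g i with hF
  have hgnn : ∀ i, 0 ≤ g i := fun i =>
    add_nonneg (mul_nonneg (hα i).le (hAnn i)) (mul_nonneg (hβ i).le (hBnn i))
  have hFnn : ∀ k, 0 ≤ F k := fun k => Finset.sum_nonneg fun i _ => hgnn i
  -- spheres are pairwise disjoint
  have hdisj : ∀ a b : ℕ, a < b → Disjoint (S a) (S b) := by
    intro a b hab
    obtain ⟨m, rfl⟩ : ∃ m, b = m + 1 := ⟨b - 1, by omega⟩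
    rw [hSrec m]
    have hsub : S a ⊆ (Finset.range (m + 1)).biUnion S :=
      Finset.subset_biUnion_of_mem S (Finset.mem_range.mpr (by omega))
    exact (Finset.sdiff_disjoint.mono_right hsub).symm
  -- neighbours of a vertex in S k lie in spheres of radius ≤ k+1
  have hsubN : ∀ k, ∀ i ∈ S k, 𝒩 i ⊆ (Finset.range (k + 2)).biUnion S := by
    intro k i hi j hj
    by_cases hcase : j ∈ (Finset.range (k + 1)).biUnion S
    · exact Finset.biUnion_subset_biUnion_of_subset_left S
        (Finset.range_subset_range.mpr (by omega)) hcase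
    · refine Finset.mem_biUnion.mpr ⟨k + 1, Finset.mem_range.mpr (by omega), ?_⟩
      rw [hSrec k, Finset.mem_sdiff]
      exact ⟨Finset.mem_biUnion.mpr ⟨i, hi, hj⟩, hcase⟩
  -- γ is positive
  have hz : z ∈ S 0 := by rw [hS0]; exact Finset.mem_singleton_self z
  have hγpos : 0 < γ := by
    obtain ⟨j, hj⟩ := hne 0 hr z hz
    have h1 := (hratio 0 hr z hz j hj).1
    nlinarith [hα' z, hα j]
  have ht : γ * n ≤ γbar * (1 - γbar) := (le_div_iff₀ hn0).mp hγθ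
  -- main recursive estimate
  have hstep : ∀ k, k < r → F k ≤ γ * n * ∑ h ∈ Finset.range (k + 2), F h := by
    intro k hk
    have h1 : F k ≤ γ * ∑ i ∈ S k, ∑ j ∈ 𝒩 i, g j := by
      rw [Finset.mul_sum]
      apply Finset.sum_le_sum
      intro i hi
      refine le_trans (hmain k hk i hi) ?_
      have h2 : α' i * ∑ j ∈ 𝒩 i, A j + β' i * ∑ j ∈ 𝒩 i, B j ≤ γ * ∑ j ∈ 𝒩 i, g j := by
        rw [Finset.mul_sum, Finset.mul_sum, Finset.mul_sum, ← Finset.sum_add_distrib]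
        apply Finset.sum_le_sum
        intro j hj
        obtain ⟨ha, hb⟩ := hratio k hk i hi j hj
        have e1 := mul_le_mul_of_nonneg_right ha (hAnn j)
        have e2 := mul_le_mul_of_nonneg_right hb (hBnn j)
        simp only [hg]
        nlinarith
      exact h2
    have h3 : ∑ i ∈ S k, ∑ j ∈ 𝒩 i, g j ≤ n * ∑ h ∈ Finset.range (k + 2), F h := by
      have hc1 : ∑ i ∈ S k, ∑ j ∈ 𝒩 i, g j
          = ∑ j ∈ (Finset.range (k + 2)).biUnion S,
              (((S k).filter fun i => j ∈ 𝒩 i).card : ℝ) * g j := by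
        calc ∑ i ∈ S k, ∑ j ∈ 𝒩 i, g j
            = ∑ i ∈ S k, ∑ j ∈ (Finset.range (k + 2)).biUnion S,
                if j ∈ 𝒩 i then g j else 0 := by
              apply Finset.sum_congr rfl
              intro i hi
              rw [Finset.sum_ite_mem, Finset.inter_eq_right.mpr (hsubN k i hi)]
          _ = ∑ j ∈ (Finset.range (k + 2)).biUnion S, ∑ i ∈ S k,
                if j ∈ 𝒩 i then g j else 0 := Finset.sum_comm
          _ = _ := by
              apply Finset.sum_congr rfl
              intro j _
              rw [← Finset.sum_filter, Finset.sum_const, nsmul_eq_mul]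
      rw [hc1]
      have hc2 : ∑ j ∈ (Finset.range (k + 2)).biUnion S,
          (((S k).filter fun i => j ∈ 𝒩 i).card : ℝ) * g j
          ≤ ∑ j ∈ (Finset.range (k + 2)).biUnion S, n * g j := by
        apply Finset.sum_le_sum
        intro j _
        exact mul_le_mul_of_nonneg_right (hN k j) (hgnn j)
      refine hc2.trans (le_of_eq ?_)
      rw [← Finset.mul_sum]
      congr 1
      rw [Finset.sum_biUnion]
      intro a ha b hb hab
      rcases lt_or_gt_of_ne hab with h | h
      · exact hdisj a b h
      · exact (hdisj b a h).symm
    calc F k ≤ γ * ∑ i ∈ S k, ∑ j ∈ 𝒩 i, g j := h1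
      _ ≤ γ * (n * ∑ h ∈ Finset.range (k + 2), F h) :=
          mul_le_mul_of_nonneg_left h3 hγpos.le
      _ = γ * n * ∑ h ∈ Finset.range (k + 2), F h := by ring
  -- one-step decay, by strong induction
  have hkey : ∀ k, k < r → F k ≤ γbar * F (k + 1) := by
    intro k
    induction k using Nat.strong_induction_on with
    | _ k ih =>
      intro hk
      have hchain : ∀ d h, h + d = k → F h ≤ γbar ^ d * F k := by
        intro d
        induction d with
        | zero =>
          intro h hh
          have : h = k := by omega
          subst this; simp
        | succ d hd =>
          intro h hh
          have h1 : F h ≤ γbar * F (h + 1) := ih h (by omega) (by omega)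
          have h2 : F (h + 1) ≤ γbar ^ d * F k := hd (h + 1) (by omega)
          calc F h ≤ γbar * F (h + 1) := h1
            _ ≤ γbar * (γbar ^ d * F k) := mul_le_mul_of_nonneg_left h2 hγb0.le
            _ = γbar ^ (d + 1) * F k := by ring
      set Sgeo : ℝ := ∑ m ∈ Finset.range (k + 1), γbar ^ m with hSg
      have hSgnn : 0 ≤ Sgeo := Finset.sum_nonneg fun m _ => pow_nonneg hγb0.le m
      have hSgb : Sgeo * (1 - γbar) ≤ 1 := by
        have := geom_sum_mul γbar (k + 1)
        have hp : (0:ℝ) ≤ γbar ^ (k + 1) := pow_nonneg hγb0.le (k + 1)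
        nlinarith
      have hsum : ∑ h ∈ Finset.range (k + 1), F h ≤ Sgeo * F k := by
        have e1 : ∑ h ∈ Finset.range (k + 1), F h
            ≤ ∑ h ∈ Finset.range (k + 1), γbar ^ (k - h) * F k := by
          apply Finset.sum_le_sum
          intro h hh
          exact hchain (k - h) h (by have := Finset.mem_range.mp hh; omega)
        have e2 : ∑ h ∈ Finset.range (k + 1), γbar ^ (k - h) * F k = Sgeo * F k := by
          rw [← Finset.sum_mul, hSg, ← Finset.sum_range_reflect (fun m => γbar ^ m) (k + 1)]
          congr 1
        exact e1.trans (le_of_eq e2)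
      have hrec : F k ≤ γ * n * (Sgeo * F k + F (k + 1)) := by
        refine (hstep k hk).trans ?_
        rw [Finset.sum_range_succ]
        have : (0:ℝ) ≤ γ * n := by positivity
        nlinarith [hsum]
      have htS : γ * n * Sgeo ≤ γbar := by
        have e1 : γ * n * Sgeo ≤ γbar * (1 - γbar) * Sgeo :=
          mul_le_mul_of_nonneg_right ht hSgnn
        nlinarith
      have e3 : γ * n * F (k + 1) ≤ γbar * (1 - γbar) * F (k + 1) :=
        mul_le_mul_of_nonneg_right ht (hFnn (k + 1))
      have e4 : γ * n * Sgeo * F k ≤ γbar * F k :=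
        mul_le_mul_of_nonneg_right htS (hFnn k)
      nlinarith [hFnn k, hFnn (k + 1)]
  -- iterate
  have hiter : ∀ k, k ≤ r → F 0 ≤ γbar ^ k * F k := by
    intro k
    induction k with
    | zero => intro _; simp
    | succ k ih =>
      intro hk
      calc F 0 ≤ γbar ^ k * F k := ih (by omega)
        _ ≤ γbar ^ k * (γbar * F (k + 1)) :=
            mul_le_mul_of_nonneg_left (hkey k (by omega)) (pow_nonneg hγb0.le k)
        _ = γbar ^ (k + 1) * F (k + 1) := by ring
  have hF0 : F 0 = α z * A z + β z * B z := by
    simp only [hF, hg, hS0, Finset.sum_singleton]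
  have := hiter r le_rfl
  rw [hF0] at this
  exact this
end

section
/- Lemma (recursive inequality with a source at a distant vertex, Lemma 5.2, part 1). Let a directed graph on the finite vertex set V = {0,…,N−1} with distinguished vertex 0 be given, with 𝒩 i ≠ ∅ for every i ∈ V, and let k ∈ V and r ≥ 1 with k ∼ᵣ 0. Then there exist θ* ∈ (0,1) and γ̃^(r) > 0, depending only on the graph, r and k, with the following property: for all families of nonnegative reals (Aⁱ)_{i∈V}, (Bⁱ)_{i∈V}, a real E ≥ 0, and positive reals (αᵢ), (βᵢ), (α′ᵢ), (β′ᵢ) satisfying αᵢ·Aⁱ + βᵢ·Bⁱ ≤ E·𝟙_{i=k} + α′ᵢ·∑_{j∈𝒩 i} Aʲ + β′ᵢ·∑_{j∈𝒩 i} Bʲ for every i ∈ V, if γ := max over i ∈ V of max( α′ᵢ / (min_{j∈𝒩 i} αⱼ), β′ᵢ / (min_{j∈𝒩 i} βⱼ) ) satisfies γ ≤ θ*, then α₀·A⁰ + β₀·B⁰ ≤ γ̃^(r) · E. -/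
/-! Summing the recursive inequality over all vertices bounds the total mass `F = ∑ᵢ (αᵢAⁱ + βᵢBⁱ)`
by `E + N θ F`, since each neighbourhood sum is at most `F`. For `θ = 1/(2N)` this gives
`F ≤ 2E`, and the term at `0` is part of `F`. -/

open Finset

lemma mul_sum_add_mul_sum_le_mul_sum {ι : Type*} (t : Finset ι) (A B α β : ι → ℝ)
    (a b γ : ℝ) (hA : ∀ j ∈ t, 0 ≤ A j) (hB : ∀ j ∈ t, 0 ≤ B j)
    (h : ∀ j ∈ t, a ≤ γ * α j ∧ b ≤ γ * β j) :
    a * ∑ j ∈ t, A j + b * ∑ j ∈ t, B j ≤ γ * ∑ j ∈ t, (α j * A j + β j * B j) := by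
  rw [mul_sum, mul_sum, mul_sum, ← sum_add_distrib]
  refine sum_le_sum fun j hj => ?_
  have hAj := mul_le_mul_of_nonneg_right (h j hj).1 (hA j hj)
  have hBj := mul_le_mul_of_nonneg_right (h j hj).2 (hB j hj)
  linarith

lemma sum_le_two_mul_sum_of_le_add_mul_sum {ι : Type*} [Fintype ι] (𝒩 : ι → Finset ι)
    (f s : ι → ℝ) (θ : ℝ) (hf : ∀ i, 0 ≤ f i) (hθ : 0 ≤ θ)
    (hθι : Fintype.card ι * θ ≤ 1 / 2) (h : ∀ i, f i ≤ s i + θ * ∑ j ∈ 𝒩 i, f j) :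
    ∑ i, f i ≤ 2 * ∑ i, s i := by
  set F := ∑ i, f i
  have hF : 0 ≤ F := sum_nonneg fun i _ => hf i
  have hnbhd : ∀ i, ∑ j ∈ 𝒩 i, f j ≤ F := fun i =>
    sum_le_univ_sum_of_nonneg hf
  have htotal : F ≤ ∑ i, s i + Fintype.card ι * θ * F :=
    calc F ≤ ∑ i, (s i + θ * F) :=
          sum_le_sum fun i _ => (h i).trans (by gcongr; exact hnbhd i)
      _ = ∑ i, s i + Fintype.card ι * θ * F := by
          rw [sum_add_distrib, sum_const, card_univ, nsmul_eq_mul, mul_assoc]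
  nlinarith

theorem stmt2_general (N : ℕ) [NeZero N]
    (𝒩 : Fin N → Finset (Fin N))
    (k : Fin N) :
    ∃ θstar : ℝ, θstar ∈ Set.Ioo (0 : ℝ) 1 ∧ ∃ γt : ℝ, 0 < γt ∧
      ∀ (A B α β α' β' : Fin N → ℝ) (E : ℝ), 0 ≤ E →
        (∀ i, 0 ≤ A i) → (∀ i, 0 ≤ B i) →
        (∀ i, 0 < α i) → (∀ i, 0 < β i) → (∀ i, 0 < α' i) → (∀ i, 0 < β' i) →
        (∀ i, α i * A i + β i * B i ≤
          (if i = k then E else 0) + α' i * ∑ j ∈ 𝒩 i, A j + β' i * ∑ j ∈ 𝒩 i, B j) →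
        ∀ γ : ℝ,
          (∀ i, ∀ j ∈ 𝒩 i, α' i ≤ γ * α j ∧ β' i ≤ γ * β j) →
          γ ≤ θstar →
          α 0 * A 0 + β 0 * B 0 ≤ γt * E := by
  have hN : (1 : ℝ) ≤ N := by exact_mod_cast NeZero.one_le
  refine ⟨1 / (2 * N), ⟨by positivity, by rw [div_lt_one (by positivity)]; linarith⟩,
    2, two_pos, ?_⟩
  intro A B α β α' β' E _ hA hB hα hβ _ _ hyp γ hγ hγθ
  set f : Fin N → ℝ := fun i => α i * A i + β i * B i
  have hf : ∀ i, 0 ≤ f i := fun i =>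
    add_nonneg (mul_nonneg (hα i).le (hA i)) (mul_nonneg (hβ i).le (hB i))
  have hrec : ∀ i, f i ≤ (if i = k then E else 0) + 1 / (2 * N) * ∑ j ∈ 𝒩 i, f j := by
    intro i
    have hγf := mul_sum_add_mul_sum_le_mul_sum (𝒩 i) A B α β (α' i) (β' i) γ
      (fun j _ => hA j) (fun j _ => hB j) (hγ i)
    have hθf := mul_le_mul_of_nonneg_right hγθ (sum_nonneg fun j (_ : j ∈ 𝒩 i) => hf j)
    linarith [hyp i]
  have htotal := sum_le_two_mul_sum_of_le_add_mul_sum 𝒩 f _ _ hf (by positivity)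
    (by rw [Fintype.card_fin]; field_simp; norm_num) hrec
  rw [sum_ite_eq' univ k, if_pos (mem_univ k)] at htotal
  exact (single_le_sum (fun i _ => hf i) (mem_univ 0)).trans htotal

/-- **Lemma 5.2, part 1** (recursive inequality with a source at a distant vertex).
The graph is on the finite vertex set `Fin N` (i.e. `{0,…,N−1}`) with
distinguished vertex `0`, finite neighbourhoods `𝒩 i` with `i ∉ 𝒩 i` and
`𝒩 i ≠ ∅` for all `i`; `S` is the family of distance spheres of `0`.  Given
`k ∼ᵣ 0` with `r ≥ 1`, there exist `θ* ∈ (0,1)` and `γ̃⁽ʳ⁾ > 0` such that for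
all nonnegative `(Aⁱ), (Bⁱ)`, `E ≥ 0` and positive `(αᵢ), (βᵢ), (α'ᵢ), (β'ᵢ)`
with `αᵢ Aⁱ + βᵢ Bⁱ ≤ E·𝟙_{i=k} + α'ᵢ ∑_{j∈𝒩 i} Aʲ + β'ᵢ ∑_{j∈𝒩 i} Bʲ` for all
`i`, if the ratio bound `γ` satisfies `γ ≤ θ*` then
`α₀ A⁰ + β₀ B⁰ ≤ γ̃⁽ʳ⁾ · E`. -/
theorem stmt2 (N : ℕ) [NeZero N]
    (𝒩 : Fin N → Finset (Fin N)) (hloop : ∀ i, i ∉ 𝒩 i)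
    (hne : ∀ i, (𝒩 i).Nonempty)
    (S : ℕ → Finset (Fin N)) (hS0 : S 0 = {0})
    (hS : ∀ m, S (m + 1) = ((S m).biUnion 𝒩) \ ((Finset.range (m + 1)).biUnion S))
    (k : Fin N) (r : ℕ) (hr : 1 ≤ r) (hk : k ∈ S r) :
    ∃ θstar : ℝ, θstar ∈ Set.Ioo (0 : ℝ) 1 ∧ ∃ γt : ℝ, 0 < γt ∧
      ∀ (A B α β α' β' : Fin N → ℝ) (E : ℝ), 0 ≤ E →
        (∀ i, 0 ≤ A i) → (∀ i, 0 ≤ B i) →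
        (∀ i, 0 < α i) → (∀ i, 0 < β i) → (∀ i, 0 < α' i) → (∀ i, 0 < β' i) →
        (∀ i, α i * A i + β i * B i ≤
          (if i = k then E else 0) + α' i * ∑ j ∈ 𝒩 i, A j + β' i * ∑ j ∈ 𝒩 i, B j) →
        ∀ γ : ℝ,
          (∀ i, ∀ j ∈ 𝒩 i, α' i ≤ γ * α j ∧ β' i ≤ γ * β j) →
          γ ≤ θstar →
          α 0 * A 0 + β 0 * B 0 ≤ γt * E :=
  stmt2_general N 𝒩 k
end

section
/- Lemma (uniform exponential decay for the source problem, Lemma 5.2, part 2). Fix a real 𝔫 ≥ 1 and γ̄ ∈ (0,1). There exist θ* ∈ (0,1) and C ≥ 0, with θ* depending only on 𝔫 and γ̄ and C depending only on 𝔫, with the following property: for every directed graph on a finite vertex set V = {0,…,N−1} with distinguished vertex 0, with 𝒩 i ≠ ∅ for every i ∈ V and N_k^h ≤ 𝔫 for all h ∈ ℕ, k ∈ V, for every k ∈ V and r ≥ 1 with k ∼ᵣ 0, and for all nonnegative reals (Aⁱ), (Bⁱ), E ≥ 0 and positive reals (αᵢ), (βᵢ), (α′ᵢ), (β′ᵢ)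 satisfying αᵢ·Aⁱ + βᵢ·Bⁱ ≤ E·𝟙_{i=k} + α′ᵢ·∑_{j∈𝒩 i} Aʲ + β′ᵢ·∑_{j∈𝒩 i} Bʲ for every i ∈ V, if γ := max over i ∈ V of max( α′ᵢ / (min_{j∈𝒩 i} αⱼ), β′ᵢ / (min_{j∈𝒩 i} βⱼ) ) satisfies γ ≤ θ*, then α₀·A⁰ + β₀·B⁰ ≤ C·γ̄^r·E. -/
/-!
With `x i := α i * A i + β i * B i`, the hypotheses give `x i ≤ E·𝟙_{i=k} + γ ∑_{j ∈ 𝒩 i} x j`.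
Summing over the sphere `S h` and using that each vertex has at most `𝔫` in-neighbours in `S h`
and that neighbours of `S h` lie in `S 0 ∪ ⋯ ∪ S (h+1)`, the sphere masses `M h` satisfy
`M h ≤ E·𝟙_{k ∈ S h} + γ𝔫 (M 0 + ⋯ + M (h+1))`. Weighting by `q^h` with `q := γ̄` and summing,
the forward terms cost a factor `1/(q(1-q))`, so for `γ𝔫 ≤ q(1-q)/2` they are absorbed and
`x 0 = M 0 ≤ ∑ q^h M h ≤ 2 q^r E`.
-/

open Finset Function

lemma mul_sum_le_mul_sum_mul {ι : Type*} {t : Finset ι} {a f : ι → ℝ} {c γ : ℝ}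
    (hc : ∀ j ∈ t, c ≤ γ * a j) (hf : ∀ j ∈ t, 0 ≤ f j) :
    c * ∑ j ∈ t, f j ≤ γ * ∑ j ∈ t, a j * f j := by
  rw [mul_sum, mul_sum]
  refine sum_le_sum fun j hj => ?_
  calc c * f j ≤ γ * a j * f j := mul_le_mul_of_nonneg_right (hc j hj) (hf j hj)
    _ = γ * (a j * f j) := mul_assoc _ _ _

lemma le_add_mul_sum_of_coeff_le {ι : Type*} {t : Finset ι} {A B α β : ι → ℝ}
    {y e a b γ : ℝ} (hA : ∀ j ∈ t, 0 ≤ A j) (hB : ∀ j ∈ t, 0 ≤ B j)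
    (hγ : ∀ j ∈ t, a ≤ γ * α j ∧ b ≤ γ * β j)
    (hy : y ≤ e + a * ∑ j ∈ t, A j + b * ∑ j ∈ t, B j) :
    y ≤ e + γ * ∑ j ∈ t, (α j * A j + β j * B j) := by
  have haA := mul_sum_le_mul_sum_mul (fun j hj => (hγ j hj).1) hA
  have hbB := mul_sum_le_mul_sum_mul (fun j hj => (hγ j hj).2) hB
  rw [sum_add_distrib]
  linarith

lemma sum_sum_le_mul_sum_of_card_filter_le {ι κ : Type*} [DecidableEq κ] {s : Finset ι}
    {t : Finset κ} {𝒩 : ι → Finset κ} {x : κ → ℝ} {n : ℝ} (hsub : ∀ i ∈ s, 𝒩 i ⊆ t)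
    (hx : ∀ j ∈ t, 0 ≤ x j) (hcard : ∀ j ∈ t, ((s.filter fun i => j ∈ 𝒩 i).card : ℝ) ≤ n) :
    ∑ i ∈ s, ∑ j ∈ 𝒩 i, x j ≤ n * ∑ j ∈ t, x j := by
  rw [sum_comm' (t' := t) (s' := fun j => s.filter fun i => j ∈ 𝒩 i)
    (fun i j => ⟨fun h => ⟨mem_filter.2 h, hsub i h.1 h.2⟩, fun h => mem_filter.1 h.1⟩), mul_sum]
  refine sum_le_sum fun j hj => ?_
  rw [sum_const, nsmul_eq_mul]
  exact mul_le_mul_of_nonneg_right (hcard j hj) (hx j hj)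

lemma sum_pow_mul_sum_range_le {q : ℝ} (hq0 : 0 < q) (hq1 : q < 1) {M : ℕ → ℝ}
    (hM : ∀ m, 0 ≤ M m) (L : ℕ) :
    ∑ h ∈ range L, q ^ h * ∑ m ∈ range (h + 2), M m
      ≤ (q * (1 - q))⁻¹ * ∑ m ∈ range (L + 1), q ^ m * M m := by
  simp_rw [mul_sum]
  rw [sum_comm' (t' := range (L + 1)) (s' := fun m => Ico (m - 1) L)
    (fun h m => by simp only [mem_range, mem_Ico]; omega)]
  refine sum_le_sum fun m _ => ?_
  have hgeom : ∑ h ∈ Ico (m - 1) L, q ^ h ≤ q ^ m / (q * (1 - q)) := by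
    calc ∑ h ∈ Ico (m - 1) L, q ^ h ≤ q ^ (m - 1) / (1 - q) :=
          geom_sum_Ico_le_of_lt_one hq0.le hq1
      _ = q ^ (m - 1 + 1) / (q * (1 - q)) := by
          rw [pow_succ]; field_simp
      _ ≤ q ^ m / (q * (1 - q)) :=
          div_le_div_of_nonneg_right (pow_le_pow_of_le_one hq0.le hq1.le (by omega))
            (mul_pos hq0 (by linarith)).le
  calc ∑ h ∈ Ico (m - 1) L, q ^ h * M m = (∑ h ∈ Ico (m - 1) L, q ^ h) * M m := by
        rw [sum_mul]
    _ ≤ q ^ m / (q * (1 - q)) * M m := mul_le_mul_of_nonneg_right hgeom (hM m)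
    _ = (q * (1 - q))⁻¹ * (q ^ m * M m) := by ring

/-- A discrete Grönwall inequality with one step of look-ahead. -/
lemma sum_pow_mul_le_two_mul_of_le_sum_range {q c : ℝ} (hq0 : 0 < q) (hq1 : q < 1)
    (hc0 : 0 ≤ c) (hc : c ≤ q * (1 - q) / 2) {M s : ℕ → ℝ} (hM : ∀ m, 0 ≤ M m) {L : ℕ}
    (hML : M L = 0) (hMs : ∀ h, M h ≤ s h + c * ∑ m ∈ range (h + 2), M m) :
    ∑ h ∈ range L, q ^ h * M h ≤ 2 * ∑ h ∈ range L, q ^ h * s h := by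
  set Ψ := ∑ h ∈ range L, q ^ h * M h
  have hΨ0 : 0 ≤ Ψ := sum_nonneg fun h _ => mul_nonneg (by positivity) (hM h)
  have hq : 0 < q * (1 - q) := mul_pos hq0 (by linarith)
  have hcq : c * (q * (1 - q))⁻¹ ≤ 1 / 2 := by
    rw [← div_eq_mul_inv, div_le_iff₀ hq]; linarith
  have hforward := sum_pow_mul_sum_range_le hq0 hq1 hM L
  rw [sum_range_succ, hML, mul_zero, add_zero] at hforward
  have hΨ : Ψ ≤ ∑ h ∈ range L, q ^ h * s h + c * ((q * (1 - q))⁻¹ * Ψ) :=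
    calc Ψ ≤ ∑ h ∈ range L, q ^ h * (s h + c * ∑ m ∈ range (h + 2), M m) :=
          sum_le_sum fun h _ => mul_le_mul_of_nonneg_left (hMs h) (by positivity)
      _ = ∑ h ∈ range L, q ^ h * s h
            + c * ∑ h ∈ range L, q ^ h * ∑ m ∈ range (h + 2), M m := by
          rw [mul_sum, ← sum_add_distrib]
          exact sum_congr rfl fun h _ => by ring
      _ ≤ _ := by gcongr
  nlinarith [mul_le_mul_of_nonneg_right hcq hΨ0]

section Spheres

variable {V : Type*} [DecidableEq V] {𝒩 : V → Finset V} {S : ℕ → Finset V}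
  (hS : ∀ m, S (m + 1) = ((S m).biUnion 𝒩) \ ((range (m + 1)).biUnion S))
include hS

lemma pairwise_disjoint_spheres : Pairwise (Disjoint on S) := by
  suffices ∀ h m, h < m → Disjoint (S h) (S m) from fun h m hne =>
    hne.lt_or_gt.elim (this h m) fun hlt => (this m h hlt).symm
  intro h m hm
  obtain ⟨t, rfl⟩ : ∃ t, m = t + 1 := ⟨m - 1, by omega⟩
  rw [hS t]
  exact disjoint_sdiff.mono_left (subset_biUnion_of_mem S (mem_range.2 hm))

lemma neighbours_subset_biUnion_spheres {h : ℕ} {i : V} (hi : i ∈ S h) :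
    𝒩 i ⊆ (range (h + 2)).biUnion S := by
  intro j hj
  by_cases hold : j ∈ (range (h + 1)).biUnion S
  · exact biUnion_subset_biUnion_of_subset_left S (range_subset_range.2 (by omega)) hold
  · have hnew : j ∈ S (h + 1) := by
      rw [hS]; exact mem_sdiff.2 ⟨mem_biUnion.2 ⟨i, hi, hj⟩, hold⟩
    exact mem_biUnion.2 ⟨h + 1, mem_range.2 (by omega), hnew⟩

lemma sphere_eq_empty_of_le {m h : ℕ} (hm : S m = ∅) (hmh : m ≤ h) : S h = ∅ := by
  induction h, hmh using Nat.le_induction with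
  | base => exact hm
  | succ p _ ih => rw [hS, ih, biUnion_empty, empty_sdiff]

lemma sphere_card_eq_empty [Fintype V] : S (Fintype.card V) = ∅ := by
  by_contra hne
  have hpos : ∀ m ∈ range (Fintype.card V + 1), 1 ≤ (S m).card := fun m hm =>
    card_pos.2 <| nonempty_iff_ne_empty.2 fun hm' =>
      hne (sphere_eq_empty_of_le hS hm' (by simpa [Nat.lt_succ_iff] using hm))
  have hcard := card_le_univ ((range (Fintype.card V + 1)).biUnion S)
  rw [card_biUnion ((pairwise_disjoint_spheres hS).set_pairwise _)] at hcard
  have := sum_le_sum hpos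
  simp only [sum_const, card_range, smul_eq_mul, mul_one] at this
  omega

lemma eq_of_mem_sphere_of_mem_sphere {h r : ℕ} {k : V} (hkh : k ∈ S h) (hkr : k ∈ S r) :
    h = r :=
  by_contra fun hne => disjoint_left.1 (pairwise_disjoint_spheres hS hne) hkh hkr

lemma sum_ite_mem_sphere_le {f : ℕ → ℝ} (hf : ∀ h, 0 ≤ f h) {k : V} {r : ℕ} (hkr : k ∈ S r)
    (L : ℕ) : ∑ h ∈ range L, (if k ∈ S h then f h else 0) ≤ f r := by
  have hsingle : ∀ h, (if k ∈ S h then f h else 0) = if h = r then f r else 0 := fun h => by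
    by_cases hh : h = r
    · simp [hh, hkr]
    · simp [hh, mt (eq_of_mem_sphere_of_mem_sphere hS · hkr) hh]
  rw [sum_congr rfl fun h _ => hsingle h, sum_ite_eq']
  split_ifs
  exacts [le_rfl, hf r]

lemma sum_sphere_le {x e : V → ℝ} {γ n : ℝ} (hx : ∀ i, 0 ≤ x i) (hγ : 0 ≤ γ)
    (hxe : ∀ i, x i ≤ e i + γ * ∑ j ∈ 𝒩 i, x j) {h : ℕ}
    (hcard : ∀ k : V, (((S h).filter fun j => k ∈ 𝒩 j).card : ℝ) ≤ n) :
    ∑ i ∈ S h, x i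
      ≤ ∑ i ∈ S h, e i + γ * n * ∑ m ∈ range (h + 2), ∑ i ∈ S m, x i := by
  have hcount := sum_sum_le_mul_sum_of_card_filter_le (x := x)
    (fun i hi => neighbours_subset_biUnion_spheres hS hi) (fun j _ => hx j) (fun j _ => hcard j)
  rw [sum_biUnion ((pairwise_disjoint_spheres hS).set_pairwise _)] at hcount
  calc ∑ i ∈ S h, x i ≤ ∑ i ∈ S h, (e i + γ * ∑ j ∈ 𝒩 i, x j) := sum_le_sum fun i _ => hxe i
    _ = ∑ i ∈ S h, e i + γ * ∑ i ∈ S h, ∑ j ∈ 𝒩 i, x j := by rw [sum_add_distrib, mul_sum]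
    _ ≤ _ := by rw [mul_assoc]; gcongr

end Spheres

/-- **Lemma 5.2, part 2** (uniform exponential decay for the source problem).
Fix `𝔫 ≥ 1`.  There exists `C ≥ 0` depending only on `𝔫` such that for every
`γ̄ ∈ (0,1)` there exists `θ* ∈ (0,1)` (depending only on `𝔫` and `γ̄`) with the
following property: for every directed graph on `Fin N` with distinguished
vertex `0`, neighbourhoods `𝒩 i ∌ i` that are all nonempty, distance spheres
`S`, and `N_k^h = #{j ∈ S h : k ∈ 𝒩 j} ≤ 𝔫` for all `h, k`; for every `k ∼ᵣ 0`
with `r ≥ 1` and all data as in Lemma 5.2, if the ratio bound `γ` satisfies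
`γ ≤ θ*` then `α₀ A⁰ + β₀ B⁰ ≤ C·γ̄^r·E`. -/
theorem stmt3 (n : ℝ) (hn : 1 ≤ n) :
    ∃ C : ℝ, 0 ≤ C ∧
      ∀ γbar : ℝ, γbar ∈ Set.Ioo (0 : ℝ) 1 →
      ∃ θstar : ℝ, θstar ∈ Set.Ioo (0 : ℝ) 1 ∧
      ∀ (N : ℕ) (_ : NeZero N)
        (𝒩 : Fin N → Finset (Fin N)), (∀ i, i ∉ 𝒩 i) → (∀ i, (𝒩 i).Nonempty) →
      ∀ S : ℕ → Finset (Fin N), S 0 = {0} →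
        (∀ m, S (m + 1) = ((S m).biUnion 𝒩) \ ((Finset.range (m + 1)).biUnion S)) →
        (∀ (h : ℕ) (k : Fin N), (((S h).filter fun j => k ∈ 𝒩 j).card : ℝ) ≤ n) →
      ∀ (k : Fin N) (r : ℕ), 1 ≤ r → k ∈ S r →
      ∀ (A B α β α' β' : Fin N → ℝ) (E : ℝ), 0 ≤ E →
        (∀ i, 0 ≤ A i) → (∀ i, 0 ≤ B i) →
        (∀ i, 0 < α i) → (∀ i, 0 < β i) → (∀ i, 0 < α' i) → (∀ i, 0 < β' i) →
        (∀ i, α i * A i + β i * B i ≤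
          (if i = k then E else 0) + α' i * ∑ j ∈ 𝒩 i, A j + β' i * ∑ j ∈ 𝒩 i, B j) →
        ∀ γ : ℝ,
          (∀ i, ∀ j ∈ 𝒩 i, α' i ≤ γ * α j ∧ β' i ≤ γ * β j) →
          γ ≤ θstar →
          α 0 * A 0 + β 0 * B 0 ≤ C * γbar ^ r * E := by
  refine ⟨2, by norm_num, fun q ⟨hq0, hq1⟩ => ⟨q * (1 - q) / (2 * n), ⟨?_, ?_⟩, ?_⟩⟩
  · have : 0 < 1 - q := by linarith
    positivity
  · rw [div_lt_one (by positivity)]; nlinarith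
  intro N _ 𝒩 _ h𝒩 S hS0 hS hcard k r _ hkr A B α β α' β' E hE hA hB hα hβ hα' hβ' hAB γ hγ hγθ
  set x : Fin N → ℝ := fun i => α i * A i + β i * B i
  set M : ℕ → ℝ := fun h => ∑ i ∈ S h, x i
  have hx : ∀ i, 0 ≤ x i := fun i =>
    add_nonneg (mul_nonneg (hα i).le (hA i)) (mul_nonneg (hβ i).le (hB i))
  have hγ0 : 0 ≤ γ := by
    obtain ⟨j, hj⟩ := h𝒩 0
    exact nonneg_of_mul_nonneg_left ((hα' 0).le.trans (hγ 0 j hj).1) (hα j)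
  have hxe : ∀ i, x i ≤ (if i = k then E else 0) + γ * ∑ j ∈ 𝒩 i, x j := fun i =>
    le_add_mul_sum_of_coeff_le (fun j _ => hA j) (fun j _ => hB j) (hγ i) (hAB i)
  have hM : ∀ h, M h ≤ (if k ∈ S h then E else 0) + γ * n * ∑ m ∈ range (h + 2), M m :=
    fun h => by simpa only [M, sum_ite_eq'] using sum_sphere_le hS hx hγ0 hxe (hcard h)
  have hγn : γ * n ≤ q * (1 - q) / 2 :=
    calc γ * n ≤ q * (1 - q) / (2 * n) * n := by gcongr
      _ = q * (1 - q) / 2 := by field_simp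
  have hSN : S N = ∅ := by simpa using sphere_card_eq_empty hS
  have hM0 : ∀ m, 0 ≤ M m := fun m => sum_nonneg fun i _ => hx i
  have hdecay := sum_pow_mul_le_two_mul_of_le_sum_range hq0 hq1 (by positivity) hγn hM0
    (L := N) (by simp [M, hSN]) hM
  have hsource : ∑ h ∈ range N, q ^ h * (if k ∈ S h then E else 0) ≤ q ^ r * E := by
    simpa only [mul_ite, mul_zero] using
      sum_ite_mem_sphere_le hS (f := fun h => q ^ h * E) (fun h => by positivity) hkr N
  have hx0 : x 0 ≤ ∑ h ∈ range N, q ^ h * M h :=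
    calc x 0 = q ^ 0 * M 0 := by simp [M, hS0]
      _ ≤ _ := single_le_sum (f := fun h => q ^ h * M h) (fun h _ => by have := hM0 h; positivity)
          (mem_range.2 (NeZero.pos N))
  calc α 0 * A 0 + β 0 * B 0 = x 0 := rfl
    _ ≤ 2 * (q ^ r * E) := hx0.trans (hdecay.trans (by gcongr))
    _ = 2 * q ^ r * E := by ring
end

section
/- Proposition (one-step sphere-to-sphere bound, core of the proof of Lemma 5.1). Let a directed graph on a countable vertex set V with distinguished vertex 0 be given, let r ≥ 1 and γ > 0, and define γ₀, γ₁, …, γ_{r−1} as in the context, assuming that for each h ∈ {1,…,r−1} the denominator in the definition of γ_h is positive. Let (Cⁱ)_{i∈V} be nonnegative reals satisfying Cⁱ ≤ γ·∑_{j∈𝒩 i} Cʲ for every i with i ∼ₕ 0 for some h ∈ {0,…,r−1}. Then for every h ∈ {0,…,r−1} one has ∑_{i ∼ₕ 0} Cⁱ ≤ γ_h · ∑_{i ∼_{h+1} 0} Cⁱ, and consequently C⁰ ≤ (∏_{j=0}^{r−1} γ_j) · ∑_{i ∼ᵣ 0} Cⁱ. -/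
/-- `N_k^h = #{j ∈ 𝒩₀^(h) : k ∈ 𝒩 j}`. -/
def Nkh {V : Type*} [DecidableEq V] (𝒩 : V → Finset V) (S : ℕ → Finset V)
    (h : ℕ) (k : V) : ℕ :=
  ((S h).filter fun j => k ∈ 𝒩 j).card

/-- `max_{k ∈ 𝒩₀^(i)} N_k^h` (with the convention that a max over `∅` is `0`). -/
def Nmax {V : Type*} [DecidableEq V] (𝒩 : V → Finset V) (S : ℕ → Finset V)
    (i h : ℕ) : ℕ :=
  (S i).sup fun k => Nkh 𝒩 S h k

/-- The denominator `1 − γ·∑_{i=0}^{h} (max_{k ∈ 𝒩₀^(i)} N_k^h)·∏_{j=i}^{h−1} γ_j`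
appearing in the definition of `γ_h`. -/
noncomputable def denom {V : Type*} [DecidableEq V] (𝒩 : V → Finset V)
    (S : ℕ → Finset V) (γ : ℝ) (g : ℕ → ℝ) (h : ℕ) : ℝ :=
  1 - γ * ∑ i ∈ Finset.range (h + 1),
      (Nmax 𝒩 S i h : ℝ) * ∏ j ∈ Finset.Ico i h, g j

/-- `g` is the sequence `(γ_h)`: `γ₀ = γ` and, for `h ≥ 1`,
`γ_h = γ·(max_{k ∈ 𝒩₀^(h+1)} N_k^h) / (1 − γ·∑_{i=0}^{h} (max_{k ∈ 𝒩₀^(i)} N_k^h)·∏_{j=i}^{h−1} γ_j)`. -/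
def gammaSpec {V : Type*} [DecidableEq V] (𝒩 : V → Finset V) (S : ℕ → Finset V)
    (γ : ℝ) (g : ℕ → ℝ) : Prop :=
  g 0 = γ ∧ ∀ h, 1 ≤ h → g h = γ * (Nmax 𝒩 S (h + 1) h : ℝ) / denom 𝒩 S γ g h

/-- Double-counting: summing `∑_{j ∈ 𝒩 i} C j` over `i ∈ A` counts each `j` in the
neighbourhood union with multiplicity `#{i ∈ A : j ∈ 𝒩 i}`. -/
lemma sum_nbhd_eq {V : Type*} [DecidableEq V] (𝒩 : V → Finset V) (A : Finset V) (C : V → ℝ) :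
    ∑ i ∈ A, ∑ j ∈ 𝒩 i, C j
      = ∑ j ∈ A.biUnion 𝒩, ((A.filter fun i => j ∈ 𝒩 i).card : ℝ) * C j := by
  have h1 : ∀ i ∈ A, ∑ j ∈ 𝒩 i, C j
      = ∑ j ∈ A.biUnion 𝒩, if j ∈ 𝒩 i then C j else 0 := by
    intro i hi
    rw [Finset.sum_ite_mem, Finset.inter_eq_right.mpr (Finset.subset_biUnion_of_mem 𝒩 hi)]
  rw [Finset.sum_congr rfl h1, Finset.sum_comm]
  refine Finset.sum_congr rfl fun j _ => ?_
  rw [← Finset.sum_filter, Finset.sum_const, nsmul_eq_mul]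

/-- **Core of the proof of Lemma 5.1** (one-step sphere-to-sphere bound).
Given a directed graph with distinguished vertex `z` and distance spheres `S`,
`r ≥ 1`, `γ > 0`, the coefficients `γ_h` (with positive denominators for
`1 ≤ h ≤ r−1`), and nonnegative `(Cⁱ)` with `Cⁱ ≤ γ·∑_{j∈𝒩 i} Cʲ` for all `i`
at distance `< r` from `z`, one has `∑_{i ∼ₕ 0} Cⁱ ≤ γ_h·∑_{i ∼_{h+1} 0} Cⁱ`
for all `h < r`, and consequently `C⁰ ≤ (∏_{j=0}^{r−1} γ_j)·∑_{i ∼ᵣ 0} Cⁱ`. -/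
theorem stmt4 {V : Type*} [DecidableEq V] [Countable V]
    (𝒩 : V → Finset V) (hloop : ∀ i, i ∉ 𝒩 i)
    (z : V) (S : ℕ → Finset V) (hS0 : S 0 = {z})
    (hS : ∀ k, S (k + 1) = ((S k).biUnion 𝒩) \ ((Finset.range (k + 1)).biUnion S))
    (r : ℕ) (hr : 1 ≤ r) (γ : ℝ) (hγ : 0 < γ)
    (g : ℕ → ℝ) (hg : gammaSpec 𝒩 S γ g)
    (hden : ∀ h, 1 ≤ h → h < r → 0 < denom 𝒩 S γ g h)
    (C : V → ℝ) (hC0 : ∀ i, 0 ≤ C i)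
    (hC : ∀ h, h < r → ∀ i ∈ S h, C i ≤ γ * ∑ j ∈ 𝒩 i, C j) :
    (∀ h, h < r → ∑ i ∈ S h, C i ≤ g h * ∑ i ∈ S (h + 1), C i) ∧
      C z ≤ (∏ j ∈ Finset.range r, g j) * ∑ i ∈ S r, C i := by
  obtain ⟨hg0, hgh⟩ := hg
  have hSnn : ∀ k, (0:ℝ) ≤ ∑ i ∈ S k, C i := fun k => Finset.sum_nonneg fun i _ => hC0 i
  have hgnn : ∀ h, h < r → 0 ≤ g h := by
    intro h hhr
    rcases Nat.eq_zero_or_pos h with h0 | h1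
    · subst h0; rw [hg0]; exact hγ.le
    · rw [hgh h h1]
      exact div_nonneg (mul_nonneg hγ.le (Nat.cast_nonneg _)) (hden h h1 hhr).le
  -- pairwise disjointness of the spheres
  have hdisj : ∀ a b, a < b → Disjoint (S a) (S b) := by
    intro a b hab
    obtain ⟨m, rfl⟩ : ∃ m, b = m + 1 := ⟨b - 1, by omega⟩
    rw [hS m]
    exact (Finset.sdiff_disjoint.mono_right
      (Finset.subset_biUnion_of_mem S (Finset.mem_range.mpr (by omega)))).symm
  -- the key one-step bound
  have key : ∀ h, h < r → ∑ i ∈ S h, C i ≤ g h * ∑ i ∈ S (h + 1), C i := by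
    intro h
    induction h using Nat.strong_induction_on with
    | _ h ih =>
    intro hhr
    rcases Nat.eq_zero_or_pos h with h0 | h1
    · -- base case h = 0
      subst h0
      have hS1 : S 1 = 𝒩 z := by
        rw [hS 0, Finset.range_one, Finset.singleton_biUnion, hS0, Finset.singleton_biUnion,
          Finset.sdiff_singleton_eq_erase, Finset.erase_eq_of_notMem (hloop z)]
      rw [hS0, hS1, Finset.sum_singleton, hg0]
      exact hC 0 hr z (by rw [hS0]; exact Finset.mem_singleton_self z)
    · -- inductive case h ≥ 1
      -- chain bound from earlier spheres to sphere h
      have chainIco : ∀ m, m ≤ h → ∀ k, k ≤ m →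
          ∑ i ∈ S k, C i ≤ (∏ j ∈ Finset.Ico k m, g j) * ∑ i ∈ S m, C i := by
        intro m hm
        induction m with
        | zero => intro k hk; interval_cases k; simp
        | succ n ihn =>
          intro k hk
          rcases Nat.lt_succ_iff_lt_or_eq.mp (Nat.lt_succ_of_le hk) with hk' | rfl
          · have hkn : k ≤ n := Nat.lt_succ_iff.mp hk'
            have h1 : ∑ i ∈ S k, C i ≤ (∏ j ∈ Finset.Ico k n, g j) * ∑ i ∈ S n, C i :=
              ihn (le_trans (Nat.le_succ n) hm) k hkn
            have h2 : ∑ i ∈ S n, C i ≤ g n * ∑ i ∈ S (n + 1), C i :=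
              ih n (by omega) (by omega)
            have hprodnn : (0:ℝ) ≤ ∏ j ∈ Finset.Ico k n, g j :=
              Finset.prod_nonneg fun j hj => hgnn j (by
                have := (Finset.mem_Ico.mp hj).2; omega)
            calc ∑ i ∈ S k, C i ≤ (∏ j ∈ Finset.Ico k n, g j) * (g n * ∑ i ∈ S (n+1), C i) :=
                  h1.trans (mul_le_mul_of_nonneg_left h2 hprodnn)
              _ = (∏ j ∈ Finset.Ico k (n+1), g j) * ∑ i ∈ S (n+1), C i := by
                  rw [Finset.prod_Ico_succ_top hkn]; ring
          · simp
      -- main computation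
      set U : Finset V := (S h).biUnion 𝒩 with hU
      set B : Finset V := (Finset.range (h + 1)).biUnion S with hB
      have hSh1 : S (h + 1) = U \ B := hS h
      have step1 : ∑ i ∈ S h, C i ≤ γ * ∑ j ∈ U, (Nkh 𝒩 S h j : ℝ) * C j := by
        calc ∑ i ∈ S h, C i ≤ ∑ i ∈ S h, γ * ∑ j ∈ 𝒩 i, C j :=
              Finset.sum_le_sum fun i hi => hC h hhr i hi
          _ = γ * ∑ i ∈ S h, ∑ j ∈ 𝒩 i, C j := by rw [Finset.mul_sum]
          _ = γ * ∑ j ∈ U, (Nkh 𝒩 S h j : ℝ) * C j := by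
              rw [sum_nbhd_eq]; rfl
      have tnn : ∀ j, (0:ℝ) ≤ (Nkh 𝒩 S h j : ℝ) * C j :=
        fun j => mul_nonneg (Nat.cast_nonneg _) (hC0 j)
      have split : ∑ j ∈ U, (Nkh 𝒩 S h j : ℝ) * C j
          = ∑ j ∈ U ∩ B, (Nkh 𝒩 S h j : ℝ) * C j
            + ∑ j ∈ S (h+1), (Nkh 𝒩 S h j : ℝ) * C j := by
        rw [hSh1, Finset.sum_inter_add_sum_sdiff]
      have boundB : ∑ j ∈ U ∩ B, (Nkh 𝒩 S h j : ℝ) * C j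
          ≤ ∑ k ∈ Finset.range (h+1), (Nmax 𝒩 S k h : ℝ) * ∑ i ∈ S k, C i := by
        calc ∑ j ∈ U ∩ B, (Nkh 𝒩 S h j : ℝ) * C j
            ≤ ∑ j ∈ B, (Nkh 𝒩 S h j : ℝ) * C j :=
              Finset.sum_le_sum_of_subset_of_nonneg (Finset.inter_subset_right)
                (fun j _ _ => tnn j)
          _ = ∑ k ∈ Finset.range (h+1), ∑ j ∈ S k, (Nkh 𝒩 S h j : ℝ) * C j := by
              rw [hB, Finset.sum_biUnion]
              intro a ha b hb hab
              rcases Nat.lt_or_ge a b with hlt | hge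
              · exact hdisj a b hlt
              · exact (hdisj b a (lt_of_le_of_ne hge (Ne.symm hab))).symm
          _ ≤ ∑ k ∈ Finset.range (h+1), (Nmax 𝒩 S k h : ℝ) * ∑ i ∈ S k, C i := by
              refine Finset.sum_le_sum fun k _ => ?_
              rw [Finset.mul_sum]
              refine Finset.sum_le_sum fun j hj => ?_
              exact mul_le_mul_of_nonneg_right
                (Nat.cast_le.mpr (Finset.le_sup (f := fun k => Nkh 𝒩 S h k) hj)) (hC0 j)
      have boundTop : ∑ j ∈ S (h+1), (Nkh 𝒩 S h j : ℝ) * C j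
          ≤ (Nmax 𝒩 S (h+1) h : ℝ) * ∑ i ∈ S (h+1), C i := by
        rw [Finset.mul_sum]
        refine Finset.sum_le_sum fun j hj => ?_
        exact mul_le_mul_of_nonneg_right
          (Nat.cast_le.mpr (Finset.le_sup (f := fun k => Nkh 𝒩 S h k) hj)) (hC0 j)
      have boundB2 : ∑ k ∈ Finset.range (h+1), (Nmax 𝒩 S k h : ℝ) * ∑ i ∈ S k, C i
          ≤ (∑ k ∈ Finset.range (h+1), (Nmax 𝒩 S k h : ℝ) * ∏ j ∈ Finset.Ico k h, g j)
              * ∑ i ∈ S h, C i := by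
        rw [Finset.sum_mul]
        refine Finset.sum_le_sum fun k hk => ?_
        have hkh : k ≤ h := Nat.lt_succ_iff.mp (Finset.mem_range.mp hk)
        rw [mul_assoc]
        exact mul_le_mul_of_nonneg_left (chainIco h le_rfl k hkh) (Nat.cast_nonneg _)
      -- put it together
      have main : denom 𝒩 S γ g h * ∑ i ∈ S h, C i
          ≤ γ * (Nmax 𝒩 S (h+1) h : ℝ) * ∑ i ∈ S (h+1), C i := by
        have : ∑ i ∈ S h, C i
            ≤ γ * ((∑ k ∈ Finset.range (h+1), (Nmax 𝒩 S k h : ℝ) * ∏ j ∈ Finset.Ico k h, g j)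
                * ∑ i ∈ S h, C i)
              + γ * ((Nmax 𝒩 S (h+1) h : ℝ) * ∑ i ∈ S (h+1), C i) := by
          calc ∑ i ∈ S h, C i ≤ γ * ∑ j ∈ U, (Nkh 𝒩 S h j : ℝ) * C j := step1
            _ = γ * (∑ j ∈ U ∩ B, (Nkh 𝒩 S h j : ℝ) * C j
                  + ∑ j ∈ S (h+1), (Nkh 𝒩 S h j : ℝ) * C j) := by rw [split]
            _ ≤ _ := by
                rw [mul_add]
                exact add_le_add
                  (mul_le_mul_of_nonneg_left (boundB.trans boundB2) hγ.le)
                  (mul_le_mul_of_nonneg_left boundTop hγ.le)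
        unfold denom
        nlinarith [this]
      have hd := hden h h1 hhr
      rw [hgh h h1, div_mul_eq_mul_div, le_div_iff₀ hd, mul_comm _ (denom 𝒩 S γ g h)]
      exact main
  refine ⟨key, ?_⟩
  have chain : ∀ h, h ≤ r → C z ≤ (∏ j ∈ Finset.range h, g j) * ∑ i ∈ S h, C i := by
    intro h
    induction h with
    | zero => intro _; simp [hS0]
    | succ m ihm =>
      intro hm
      have h1 := ihm (Nat.le_of_succ_le hm)
      have h2 := key m (Nat.lt_of_succ_le hm)
      have hprodnn : (0:ℝ) ≤ ∏ j ∈ Finset.range m, g j :=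
        Finset.prod_nonneg fun j hj => hgnn j (by
          have := Finset.mem_range.mp hj; omega)
      calc C z ≤ (∏ j ∈ Finset.range m, g j) * (g m * ∑ i ∈ S (m+1), C i) :=
            h1.trans (mul_le_mul_of_nonneg_left h2 hprodnn)
        _ = (∏ j ∈ Finset.range (m+1), g j) * ∑ i ∈ S (m+1), C i := by
            rw [Finset.prod_range_succ]; ring
  exact chain r le_rfl
end

section
/- Proposition (uniform bound on the recursion coefficients, from the proof of Lemma 5.1). Fix reals 𝔫 ≥ 1 and K > 𝔫. There exists γ* > 0, depending only on 𝔫 and K, with K·γ* < 1 and the following property: for every directed graph on a countable vertex set V with distinguished vertex 0 such that N_k^h ≤ 𝔫 for all h ∈ ℕ and k ∈ V, and every γ ∈ (0, γ*], the quantities γ_h defined in the context are well defined for all h ≥ 0 (i.e., all the denominators are positive) and satisfy γ_h ≤ K·γ/(1 − K·γ) for every h ≥ 1. -/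
/-! With `B := Kγ/(1 − Kγ)`, one shows by strong induction that `0 ≤ γ_h ≤ B` for all `h`.
If `γ_j ≤ B < 1` for `j < h`, the sum in the `h`-th denominator is at most
`𝔫·∑ B^m ≤ 𝔫/(1 − B)`, which is `≤ K` once `γ` is small; so the denominator is at least
`1 − Kγ > 0` and `γ_h ≤ γ𝔫/(1 − Kγ) ≤ B`. The threshold `γ* = (K − 𝔫)/(K(2K − 𝔫))` is chosen
so that `Kγ* = t := (K − 𝔫)/(2K − 𝔫)`, whence `KB ≤ Kt/(1 − t) = K − 𝔫`, i.e. `𝔫/(1 − B) ≤ K`. -/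

open Finset

lemma Nmax_le_of_Nkh_le {V : Type*} [DecidableEq V] {𝒩 : V → Finset V} {S : ℕ → Finset V}
    {n : ℝ} (hn : 0 ≤ n) (hN : ∀ h k, (Nkh 𝒩 S h k : ℝ) ≤ n) (i h : ℕ) :
    (Nmax 𝒩 S i h : ℝ) ≤ n :=
  calc (Nmax 𝒩 S i h : ℝ) ≤ ⌊n⌋₊ := Nat.cast_le.2 (Finset.sup_le fun k _ => Nat.le_floor (hN h k))
    _ ≤ n := Nat.floor_le hn

lemma sum_mul_prod_Ico_le {a g : ℕ → ℝ} {n B : ℝ} {h : ℕ} (ha : ∀ i, a i ≤ n) (hn : 0 ≤ n)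
    (hg : ∀ j < h, 0 ≤ g j ∧ g j ≤ B) (hB₀ : 0 ≤ B) (hB₁ : B < 1) :
    ∑ i ∈ range (h + 1), a i * ∏ j ∈ Ico i h, g j ≤ n / (1 - B) := by
  have hprod : ∀ i, ∏ j ∈ Ico i h, g j ≤ B ^ (h - i) := fun i => by
    simpa [Nat.card_Ico] using prod_le_prod (fun j hj => (hg j (mem_Ico.1 hj).2).1)
      (fun j hj => (hg j (mem_Ico.1 hj).2).2)
  calc ∑ i ∈ range (h + 1), a i * ∏ j ∈ Ico i h, g j
      ≤ ∑ i ∈ range (h + 1), n * B ^ (h - i) := sum_le_sum fun i _ =>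
        mul_le_mul (ha i) (hprod i) (prod_nonneg fun j hj => (hg j (mem_Ico.1 hj).2).1) hn
    _ = n * ∑ m ∈ Ico 0 (h + 1), B ^ m := by
        rw [← range_eq_Ico, ← sum_range_reflect (B ^ ·), mul_sum]
        simp
    _ ≤ n * (B ^ 0 / (1 - B)) := by gcongr; exact geom_sum_Ico_le_of_lt_one hB₀ hB₁
    _ = n / (1 - B) := by rw [pow_zero, mul_one_div]

section Recursion

variable {V : Type*} [DecidableEq V] {𝒩 : V → Finset V} {S : ℕ → Finset V}
  {n K γ B : ℝ} {g : ℕ → ℝ}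

lemma one_sub_le_denom (hn : 0 ≤ n) (hNmax : ∀ i h, (Nmax 𝒩 S i h : ℝ) ≤ n) (hγ : 0 < γ)
    (hB₀ : 0 ≤ B) (hB₁ : B < 1) (hnB : n / (1 - B) ≤ K) {h : ℕ}
    (hg : ∀ j < h, 0 ≤ g j ∧ g j ≤ B) :
    1 - K * γ ≤ denom 𝒩 S γ g h := by
  have := sum_mul_prod_Ico_le (hNmax · h) hn hg hB₀ hB₁
  unfold denom
  nlinarith

lemma gammaSpec_mem_Icc (hn : 0 ≤ n) (hNmax : ∀ i h, (Nmax 𝒩 S i h : ℝ) ≤ n) (hγ : 0 < γ)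
    (hKγ : K * γ < 1) (hγB : γ ≤ B) (hB₁ : B < 1) (hnB : n / (1 - B) ≤ K)
    (hγnB : γ * n / (1 - K * γ) ≤ B) (hg : gammaSpec 𝒩 S γ g) (h : ℕ) :
    0 ≤ g h ∧ g h ≤ B := by
  induction h using Nat.strong_induction_on with
  | _ h ih =>
    obtain rfl | hh := Nat.eq_zero_or_pos h
    · rw [hg.1]; exact ⟨hγ.le, hγB⟩
    have hden := one_sub_le_denom hn hNmax hγ (hγ.le.trans hγB) hB₁ hnB ih
    have hden₀ : 0 < 1 - K * γ := by linarith
    rw [hg.2 h hh]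
    refine ⟨by positivity [hden₀.trans_le hden], ?_⟩
    calc γ * (Nmax 𝒩 S (h + 1) h : ℝ) / denom 𝒩 S γ g h ≤ γ * n / (1 - K * γ) := by
          gcongr
          exact hNmax _ _
      _ ≤ B := hγnB

end Recursion

noncomputable def gammaStar (n K : ℝ) : ℝ := (K - n) / (K * (2 * K - n))

section GammaStar

variable {n K γ : ℝ}

lemma gammaStar_pos (hn : 0 ≤ n) (hK : n < K) : 0 < gammaStar n K := by
  unfold gammaStar
  have : 0 < K := hn.trans_lt hK
  apply div_pos <;> nlinarith

lemma mul_le_of_le_gammaStar (hn : 0 ≤ n) (hK : n < K) (hγ : γ ≤ gammaStar n K) :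
    K * γ * (2 * K - n) ≤ K - n := by
  have hK₀ : 0 < K := hn.trans_lt hK
  have : K * gammaStar n K = (K - n) / (2 * K - n) := by
    unfold gammaStar; field_simp
  rw [← le_div_iff₀ (by linarith), ← this]
  gcongr

lemma mul_lt_one_of_le_gammaStar (hn : 0 ≤ n) (hK : n < K) (hγ : γ ≤ gammaStar n K) :
    K * γ < 1 := by
  nlinarith [mul_le_of_le_gammaStar hn hK hγ]

lemma div_one_sub_le_of_le_gammaStar (hn : 0 ≤ n) (hK : n < K) (hγ : γ ≤ gammaStar n K) :
    K * γ / (1 - K * γ) ≤ 1 - n / K := by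
  have hK₀ : 0 < K := hn.trans_lt hK
  have := mul_le_of_le_gammaStar hn hK hγ
  rw [div_le_iff₀ (by linarith [mul_lt_one_of_le_gammaStar hn hK hγ]), one_sub_div hK₀.ne',
    div_mul_eq_mul_div, le_div_iff₀ hK₀]
  linarith

end GammaStar

/-- **Uniform bound on the recursion coefficients** (from the proof of Lemma 5.1).
Fix `𝔫 ≥ 1` and `K > 𝔫`.  There exists `γ* > 0`, depending only on `𝔫` and `K`,
with `K·γ* < 1`, such that for every directed graph with `N_k^h ≤ 𝔫` for all
`h, k` and every `γ ∈ (0, γ*]`, the quantities `γ_h` are well defined (all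
denominators positive) and satisfy `γ_h ≤ K·γ/(1 − K·γ)` for every `h ≥ 1`. -/
theorem stmt5 (n K : ℝ) (hn : 1 ≤ n) (hK : n < K) :
    ∃ γstar : ℝ, 0 < γstar ∧ K * γstar < 1 ∧
      ∀ (V : Type) (_ : DecidableEq V) (_ : Countable V)
        (𝒩 : V → Finset V), (∀ i, i ∉ 𝒩 i) →
      ∀ (z : V) (S : ℕ → Finset V), S 0 = {z} →
        (∀ k, S (k + 1) = ((S k).biUnion 𝒩) \ ((Finset.range (k + 1)).biUnion S)) →
        (∀ (h : ℕ) (k : V), (Nkh 𝒩 S h k : ℝ) ≤ n) →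
      ∀ γ : ℝ, 0 < γ → γ ≤ γstar →
      ∀ g : ℕ → ℝ, gammaSpec 𝒩 S γ g →
        (∀ h, 1 ≤ h → 0 < denom 𝒩 S γ g h) ∧
        ∀ h, 1 ≤ h → g h ≤ K * γ / (1 - K * γ) := by
  have hn₀ : 0 ≤ n := zero_le_one.trans hn
  have hK₀ : 0 < K := hn₀.trans_lt hK
  refine ⟨gammaStar n K, gammaStar_pos hn₀ hK, mul_lt_one_of_le_gammaStar hn₀ hK le_rfl, ?_⟩
  intro V _ _ 𝒩 _ z S _ _ hN γ hγ hγs g hg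
  have hNmax := Nmax_le_of_Nkh_le hn₀ hN
  have hKγ := mul_lt_one_of_le_gammaStar hn₀ hK hγs
  set B := K * γ / (1 - K * γ)
  have hBn : B ≤ 1 - n / K := div_one_sub_le_of_le_gammaStar hn₀ hK hγs
  have hB₁ : B < 1 := by linarith [div_pos (zero_lt_one.trans_le hn) hK₀]
  have hnB : n / (1 - B) ≤ K := by
    rw [div_le_iff₀ (sub_pos.2 hB₁), mul_comm, ← div_le_iff₀ hK₀]
    linarith
  have hγB : γ ≤ B := by
    have : γ ≤ K * γ := le_mul_of_one_le_left hγ.le (by linarith)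
    rw [le_div_iff₀ (sub_pos.2 hKγ)]
    nlinarith
  have hγnB : γ * n / (1 - K * γ) ≤ B := by
    refine div_le_div_of_nonneg_right ?_ (sub_pos.2 hKγ).le
    nlinarith
  have hbound := gammaSpec_mem_Icc hn₀ hNmax hγ hKγ hγB hB₁ hnB hγnB hg
  refine ⟨fun h _ => ?_, fun h _ => (hbound h).2⟩
  calc 0 < 1 - K * γ := sub_pos.2 hKγ
    _ ≤ denom 𝒩 S γ g h :=
      one_sub_le_denom hn₀ hNmax hγ (hγ.le.trans hγB) hB₁ hnB fun j _ => hbound j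
end

section
/- Proposition (exponential product bound for the recursion coefficients, from the proof of Lemma 5.1). Fix a real 𝔫 ≥ 1 and γ̄ ∈ (0,1). There exists θ* ∈ (0,1), depending only on 𝔫 and γ̄, with the following property: for every directed graph on a countable vertex set V with distinguished vertex 0 such that N_k^h ≤ 𝔫 for all h ∈ ℕ and k ∈ V, and every γ ∈ (0, θ*], the quantities γ_h defined in the context are well defined for all h ≥ 0 (all denominators positive) and satisfy γ_h ≤ γ̄ for every h ≥ 0; consequently ∏_{j=0}^{r−1} γ_j ≤ γ̄^r for every r ≥ 1. -/
/-- **Exponential product bound for the recursion coefficients** (from the proof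
of Lemma 5.1).  Fix `𝔫 ≥ 1` and `γ̄ ∈ (0,1)`.  There exists `θ* ∈ (0,1)`,
depending only on `𝔫` and `γ̄`, such that for every directed graph with
`N_k^h ≤ 𝔫` for all `h, k` and every `γ ∈ (0, θ*]`, the quantities `γ_h` are
well defined (all denominators positive) and satisfy `γ_h ≤ γ̄` for every
`h ≥ 0`; consequently `∏_{j=0}^{r−1} γ_j ≤ γ̄^r` for every `r ≥ 1`. -/
theorem stmt6 (n : ℝ) (hn : 1 ≤ n) (γbar : ℝ) (hγbar : γbar ∈ Set.Ioo (0 : ℝ) 1) :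
    ∃ θstar : ℝ, θstar ∈ Set.Ioo (0 : ℝ) 1 ∧
      ∀ (V : Type) (_ : DecidableEq V) (_ : Countable V)
        (𝒩 : V → Finset V), (∀ i, i ∉ 𝒩 i) →
      ∀ (z : V) (S : ℕ → Finset V), S 0 = {z} →
        (∀ k, S (k + 1) = ((S k).biUnion 𝒩) \ ((Finset.range (k + 1)).biUnion S)) →
        (∀ (h : ℕ) (k : V), (Nkh 𝒩 S h k : ℝ) ≤ n) →
      ∀ γ : ℝ, 0 < γ → γ ≤ θstar →
      ∀ g : ℕ → ℝ, gammaSpec 𝒩 S γ g →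
        (∀ h, 1 ≤ h → 0 < denom 𝒩 S γ g h) ∧
        (∀ h, g h ≤ γbar) ∧
        ∀ r : ℕ, 1 ≤ r → ∏ j ∈ Finset.range r, g j ≤ γbar ^ r := by
  obtain ⟨hγb0, hγb1⟩ := hγbar
  have hn0 : (0:ℝ) < n := by linarith
  refine ⟨γbar * (1 - γbar) / (2 * n), ⟨div_pos (by nlinarith) (by linarith), ?_⟩, ?_⟩
  · rw [div_lt_one (by linarith)]
    nlinarith
  intro V _ _ 𝒩 _ z S _ _ hN γ hγ0 hγθ g ⟨hg0, hgrec⟩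
  have hθγb : γbar * (1 - γbar) / (2 * n) ≤ γbar := by
    rw [div_le_iff₀ (by linarith : (0:ℝ) < 2 * n)]
    nlinarith
  have hNm : ∀ i h, (Nmax 𝒩 S i h : ℝ) ≤ n := by
    intro i h
    have h1 : Nmax 𝒩 S i h ≤ ⌊n⌋₊ :=
      Finset.sup_le fun k _ => Nat.le_floor (hN h k)
    calc (Nmax 𝒩 S i h : ℝ) ≤ (⌊n⌋₊ : ℝ) := by exact_mod_cast h1
      _ ≤ n := Nat.floor_le (by linarith)
  have key : ∀ h, (0 ≤ g h ∧ g h ≤ γbar) ∧ 1/2 ≤ denom 𝒩 S γ g h := by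
    intro h
    induction h using Nat.strong_induction_on with
    | _ h ih =>
      have hdenom : 1/2 ≤ denom 𝒩 S γ g h := by
        have hterm : ∀ i ∈ Finset.range (h+1),
            (Nmax 𝒩 S i h : ℝ) * ∏ j ∈ Finset.Ico i h, g j ≤ n * γbar ^ (h - i) := by
          intro i hi
          have hprodnn : (0:ℝ) ≤ ∏ j ∈ Finset.Ico i h, g j :=
            Finset.prod_nonneg fun j hj => ((ih j (Finset.mem_Ico.mp hj).2).1).1
          have hprodle : ∏ j ∈ Finset.Ico i h, g j ≤ γbar ^ (h - i) := by
            calc ∏ j ∈ Finset.Ico i h, g j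
                ≤ ∏ _j ∈ Finset.Ico i h, γbar :=
                  Finset.prod_le_prod (fun j hj => ((ih j (Finset.mem_Ico.mp hj).2).1).1)
                    (fun j hj => ((ih j (Finset.mem_Ico.mp hj).2).1).2)
              _ = γbar ^ (h - i) := by rw [Finset.prod_const, Nat.card_Ico]
          exact mul_le_mul (hNm i h) hprodle hprodnn (le_of_lt hn0)
        have hsum : ∑ i ∈ Finset.range (h+1), (Nmax 𝒩 S i h : ℝ) * ∏ j ∈ Finset.Ico i h, g j
            ≤ n * (1 / (1 - γbar)) := by
          calc ∑ i ∈ Finset.range (h+1), (Nmax 𝒩 S i h : ℝ) * ∏ j ∈ Finset.Ico i h, g j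
              ≤ ∑ i ∈ Finset.range (h+1), n * γbar ^ (h - i) :=
                Finset.sum_le_sum hterm
            _ = n * ∑ i ∈ Finset.range (h+1), γbar ^ (h - i) := by
                rw [Finset.mul_sum]
            _ = n * ∑ i ∈ Finset.range (h+1), γbar ^ i := by
                congr 1
                have := Finset.sum_range_reflect (fun i => γbar ^ i) (h+1)
                simpa using this
            _ ≤ n * (1 / (1 - γbar)) := by
                apply mul_le_mul_of_nonneg_left _ (le_of_lt hn0)
                have heq : ∑ i ∈ Finset.range (h+1), γbar ^ i
                    = (1 - γbar ^ (h+1)) / (1 - γbar) := by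
                  rw [geom_sum_eq (ne_of_lt hγb1),
                    div_eq_div_iff (by linarith) (by linarith)]
                  ring
                rw [heq, div_le_div_iff₀ (by linarith) (by linarith)]
                have : (0:ℝ) ≤ γbar ^ (h+1) := by positivity
                nlinarith
        have hsumnn : (0:ℝ) ≤ ∑ i ∈ Finset.range (h+1),
            (Nmax 𝒩 S i h : ℝ) * ∏ j ∈ Finset.Ico i h, g j := by
          apply Finset.sum_nonneg
          intro i hi
          exact mul_nonneg (Nat.cast_nonneg _)
            (Finset.prod_nonneg fun j hj => ((ih j (Finset.mem_Ico.mp hj).2).1).1)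
        unfold denom
        have hγ2n : γ * (2 * n) ≤ γbar * (1 - γbar) :=
          (le_div_iff₀ (by linarith : (0:ℝ) < 2 * n)).mp hγθ
        have hγθ' : γ * (n * (1 / (1 - γbar))) ≤ γbar / 2 := by
          rw [show γ * (n * (1 / (1 - γbar))) = γ * n / (1 - γbar) by ring,
            div_le_div_iff₀ (by linarith) (by norm_num : (0:ℝ) < 2)]
          nlinarith
        have h2 : γ * ∑ i ∈ Finset.range (h+1),
            (Nmax 𝒩 S i h : ℝ) * ∏ j ∈ Finset.Ico i h, g j ≤ γbar / 2 := by
          calc γ * ∑ i ∈ Finset.range (h+1),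
              (Nmax 𝒩 S i h : ℝ) * ∏ j ∈ Finset.Ico i h, g j
              ≤ γ * (n * (1 / (1 - γbar))) :=
                mul_le_mul_of_nonneg_left hsum (le_of_lt hγ0)
            _ ≤ γbar / 2 := hγθ'
        linarith
      refine ⟨?_, hdenom⟩
      rcases Nat.eq_zero_or_pos h with h0 | h1
      · subst h0
        rw [hg0]
        constructor
        · exact le_of_lt hγ0
        · linarith [hγθ, hθγb]
      · rw [hgrec h h1]
        have hdpos : (0:ℝ) < denom 𝒩 S γ g h := by linarith
        constructor
        · apply div_nonneg (mul_nonneg (le_of_lt hγ0) (Nat.cast_nonneg _)) (le_of_lt hdpos)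
        · rw [div_le_iff₀ hdpos]
          have hnum : γ * (Nmax 𝒩 S (h+1) h : ℝ) ≤ γbar * (1 - γbar) / 2 := by
            have := mul_le_mul_of_nonneg_left (hNm (h+1) h) (le_of_lt hγ0)
            have h2 : γ * n ≤ γbar * (1 - γbar) / (2 * n) * n :=
              mul_le_mul_of_nonneg_right hγθ (le_of_lt hn0)
            have h3 : γbar * (1 - γbar) / (2 * n) * n = γbar * (1 - γbar) / 2 := by
              field_simp
            linarith
          nlinarith
  refine ⟨fun h _ => by linarith [(key h).2], fun h => ((key h).1).2, ?_⟩
  intro r _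
  calc ∏ j ∈ Finset.range r, g j ≤ ∏ _j ∈ Finset.range r, γbar :=
        Finset.prod_le_prod (fun j _ => ((key j).1).1) (fun j _ => ((key j).1).2)
    _ = γbar ^ r := by rw [Finset.prod_const, Finset.card_range]
end

section
/- Proposition (one-step bounds with a source term, core of the proof of Lemma 5.2). Let a directed graph on the finite vertex set V = {0,…,N−1} with distinguished vertex 0 be given, let γ > 0, let k ∈ V and r ≥ 1 with k ∼ᵣ 0, and let h* be the least h ∈ ℕ with 𝒩₀^(h) = ∅. Assume 𝒩₀^(r+1) ≠ ∅ with s := max_{j ∈ 𝒩₀^(r+1)} N_j^r > 0, and assume that all the denominators appearing in the definitions of γ_h (for 1 ≤ h < h*) and of γ̃_j (for r < j < h*) in the context are positive. Let (Cⁱ)_{i∈V} be nonnegative reals satisfying Cⁱ ≤ E·𝟙_{i=k} + γ·∑_{j∈𝒩 i} Cʲ for every i ∈ V, where E ≥ 0. Then for every h ∈ {0,…,h*−1} one has ∑_{i ∼ₕ 0} Cⁱ ≤ γ̃_h·E·𝟙_{h ≥ r} + γ_h · ∑_{i ∼_{h+1} 0} Cⁱ, and consequently C⁰ ≤ ( ∑_{j=r}^{h*−1}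 (∏_{i=0}^{j−1} γ_i)·γ̃_j ) · E. -/
open Finset Function

theorem le_sum_mul_prod_add_prod_mul_of_le_add_mul {T a g : ℕ → ℝ} {l h : ℕ} (hlh : l ≤ h)
    (hg : ∀ m < h, 0 ≤ g m) (hT : ∀ m < h, T m ≤ a m + g m * T (m + 1)) :
    T l ≤ ∑ i ∈ Ico l h, a i * ∏ m ∈ Ico l i, g m + (∏ m ∈ Ico l h, g m) * T h := by
  induction h, hlh using Nat.le_induction with
  | base => simp
  | succ n hln ih =>
    have hP : 0 ≤ ∏ m ∈ Ico l n, g m :=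
      prod_nonneg fun m hm => hg m (by have := (mem_Ico.mp hm).2; omega)
    rw [sum_Ico_succ_top hln, prod_Ico_succ_top hln]
    calc T l ≤ ∑ i ∈ Ico l n, a i * ∏ m ∈ Ico l i, g m + (∏ m ∈ Ico l n, g m) * T n :=
          ih (fun m hm => hg m (by omega)) (fun m hm => hT m (by omega))
      _ ≤ ∑ i ∈ Ico l n, a i * ∏ m ∈ Ico l i, g m +
            (∏ m ∈ Ico l n, g m) * (a n + g n * T (n + 1)) := by
          gcongr; exact hT n (by omega)
      _ = _ := by ring

section Spheres

def IsDistanceSpheres {V : Type*} [DecidableEq V] (𝒩 : V → Finset V) (S : ℕ → Finset V) :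
    Prop :=
  ∀ m, S (m + 1) = ((S m).biUnion 𝒩) \ ((range (m + 1)).biUnion S)

variable {V : Type*} [DecidableEq V] {𝒩 : V → Finset V} {S : ℕ → Finset V}

theorem spheres_pairwise_disjoint (hS : IsDistanceSpheres 𝒩 S) :
    Pairwise (Disjoint on S) := by
  suffices ∀ a b, a < b → Disjoint (S a) (S b) from fun a b hab =>
    hab.lt_or_gt.elim (this a b) fun h => (this b a h).symm
  intro a b hab
  obtain ⟨m, rfl⟩ : ∃ m, b = m + 1 := ⟨b - 1, by omega⟩
  rw [disjoint_right, hS]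
  intro x hx hxa
  exact (mem_sdiff.mp hx).2 (mem_biUnion.mpr ⟨a, mem_range.mpr hab, hxa⟩)

theorem mem_sphere_iff_eq (hS : IsDistanceSpheres 𝒩 S)
    {k : V} {r : ℕ} (hk : k ∈ S r) {h : ℕ} : k ∈ S h ↔ h = r := by
  refine ⟨fun hkh => ?_, fun hhr => hhr ▸ hk⟩
  by_contra hne
  exact disjoint_left.mp (spheres_pairwise_disjoint hS hne) hkh hk

theorem mem_biUnion_spheres_of_mem_neighbours (hS : IsDistanceSpheres 𝒩 S)
    {h : ℕ} {i j : V} (hi : i ∈ S h) (hj : j ∈ 𝒩 i) :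
    j ∈ (range (h + 2)).biUnion S := by
  by_cases hnear : j ∈ (range (h + 1)).biUnion S
  · exact biUnion_subset_biUnion_of_subset_left S (range_subset_range.mpr (by omega)) hnear
  · have : j ∈ S (h + 1) := by
      rw [hS h]
      exact mem_sdiff.mpr ⟨mem_biUnion.mpr ⟨i, hi, hj⟩, hnear⟩
    exact mem_biUnion.mpr ⟨h + 1, mem_range.mpr (by omega), this⟩

theorem sphere_one_eq {o : V} (hS0 : S 0 = {o}) (hS : IsDistanceSpheres 𝒩 S)
    (ho : o ∉ 𝒩 o) : S 1 = 𝒩 o := by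
  simp [hS 0, hS0, ho]

theorem sum_sphere_sum_neighbours_le (hS : IsDistanceSpheres 𝒩 S)
    {C : V → ℝ} (hC0 : ∀ i, 0 ≤ C i) (h : ℕ) :
    ∑ i ∈ S h, ∑ j ∈ 𝒩 i, C j ≤
      ∑ l ∈ range (h + 2), (Nmax 𝒩 S l h : ℝ) * ∑ j ∈ S l, C j := by
  have hswap : ∑ i ∈ S h, ∑ j ∈ 𝒩 i, C j =
      ∑ j ∈ (range (h + 2)).biUnion S, ∑ _i ∈ (S h).filter (j ∈ 𝒩 ·), C j :=
    sum_comm' fun i j => by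
      simp only [mem_filter]
      exact ⟨fun hij => ⟨hij, mem_biUnion_spheres_of_mem_neighbours hS hij.1 hij.2⟩,
        fun hij => hij.1⟩
  rw [hswap, sum_biUnion ((spheres_pairwise_disjoint hS).set_pairwise _)]
  refine sum_le_sum fun l _ => ?_
  rw [mul_sum]
  refine sum_le_sum fun j hj => ?_
  rw [sum_const, nsmul_eq_mul]
  exact mul_le_mul_of_nonneg_right (Nat.cast_le.mpr (le_sup (f := Nkh 𝒩 S h) hj)) (hC0 j)

theorem sum_sphere_le_s7 (hS : IsDistanceSpheres 𝒩 S)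
    {γ E : ℝ} (hγ : 0 ≤ γ) {k : V} {r : ℕ} (hk : k ∈ S r)
    {C : V → ℝ} (hC0 : ∀ i, 0 ≤ C i)
    (hC : ∀ i, C i ≤ (if i = k then E else 0) + γ * ∑ j ∈ 𝒩 i, C j) (h : ℕ) :
    ∑ i ∈ S h, C i ≤ (if h = r then E else 0) +
      γ * ∑ l ∈ range (h + 2), (Nmax 𝒩 S l h : ℝ) * ∑ j ∈ S l, C j := by
  have hsource : ∑ i ∈ S h, (if i = k then E else 0) = if h = r then E else 0 := by
    simp only [sum_ite_eq', mem_sphere_iff_eq hS hk]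
  calc ∑ i ∈ S h, C i ≤ ∑ i ∈ S h, ((if i = k then E else 0) + γ * ∑ j ∈ 𝒩 i, C j) :=
        sum_le_sum fun i _ => hC i
    _ = (if h = r then E else 0) + γ * ∑ i ∈ S h, ∑ j ∈ 𝒩 i, C j := by
        rw [sum_add_distrib, hsource, mul_sum]
    _ ≤ _ := by gcongr; exact sum_sphere_sum_neighbours_le hS hC0 h

end Spheres

section Coefficients

variable {V : Type*} [DecidableEq V] {𝒩 : V → Finset V} {S : ℕ → Finset V} {γ : ℝ}
  {g : ℕ → ℝ}

theorem gammaSpec.nonneg (hg : gammaSpec 𝒩 S γ g) (hγ : 0 ≤ γ) {H : ℕ}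
    (hden : ∀ h, 1 ≤ h → h < H → 0 < denom 𝒩 S γ g h) {h : ℕ} (hh : h < H) : 0 ≤ g h := by
  rcases Nat.eq_zero_or_pos h with rfl | h1
  · exact hg.1 ▸ hγ
  · rw [hg.2 h h1]
    exact div_nonneg (by positivity) (hden h h1 hh).le

theorem gammaSpec.mul_denom (hg : gammaSpec 𝒩 S γ g) {h : ℕ} (h1 : 1 ≤ h)
    (hd : denom 𝒩 S γ g h ≠ 0) : g h * denom 𝒩 S γ g h = γ * Nmax 𝒩 S (h + 1) h := by
  rw [hg.2 h h1, div_mul_cancel₀ _ hd]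

/-- The three defining cases of `tg` are one recursion, with source term `𝟙_{h = r}`. -/
theorem tg_mul_denom {tg : ℕ → ℝ} {r : ℕ} (hg : gammaSpec 𝒩 S γ g) (hγ : γ ≠ 0) (hr : 1 ≤ r)
    (hs : 0 < Nmax 𝒩 S (r + 1) r)
    (htg0 : ∀ h, h < r → tg h = 0)
    (htgr : tg r = g r / (γ * (Nmax 𝒩 S (r + 1) r : ℝ)))
    (htgj : ∀ j, r < j → tg j =
      (γ * ∑ l ∈ range j, (Nmax 𝒩 S l j : ℝ) *
          ∑ i ∈ Ico (max r l) j, tg i * ∏ m ∈ Ico l i, g m) / denom 𝒩 S γ g j)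
    {h : ℕ} (hd : denom 𝒩 S γ g h ≠ 0) :
    tg h * denom 𝒩 S γ g h = (if h = r then 1 else 0) +
      γ * ∑ l ∈ range (h + 1), (Nmax 𝒩 S l h : ℝ) *
        ∑ i ∈ Ico l h, tg i * ∏ m ∈ Ico l i, g m := by
  have hlow : ∀ l j, j ≤ r → ∑ i ∈ Ico l j, tg i * ∏ m ∈ Ico l i, g m = 0 := fun l j hj =>
    sum_eq_zero fun i hi => by rw [htg0 i (by have := (mem_Ico.mp hi).2; omega), zero_mul]
  rcases lt_trichotomy h r with hlt | rfl | hgt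
  · rw [htg0 h hlt, if_neg hlt.ne, sum_eq_zero fun l _ => by rw [hlow l h hlt.le, mul_zero]]
    simp
  · have hs' : (Nmax 𝒩 S (h + 1) h : ℝ) ≠ 0 := by exact_mod_cast hs.ne'
    rw [if_pos rfl, sum_eq_zero fun l _ => by rw [hlow l h le_rfl, mul_zero], mul_zero, add_zero,
      htgr, hg.2 h hr]
    field_simp
  · rw [if_neg hgt.ne', zero_add, htgj h hgt, div_mul_cancel₀ _ hd, sum_range_succ, Ico_self,
      sum_empty, mul_zero, add_zero]
    congr 1
    refine sum_congr rfl fun l _ => ?_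
    rcases le_total r l with hrl | hlr
    · rw [max_eq_right hrl]
    · rw [max_eq_left hlr, ← sum_Ico_consecutive _ hlr hgt.le, hlow l r le_rfl, zero_add]

end Coefficients

theorem le_tg_mul_add_g_mul_of_forall_lt {V : Type*} [DecidableEq V] {𝒩 : V → Finset V}
    {S : ℕ → Finset V} {γ E : ℝ} {g tg T : ℕ → ℝ} {r h : ℕ} (hγ : 0 ≤ γ)
    (hd : 0 < denom 𝒩 S γ g h) (hg : ∀ m < h, 0 ≤ g m)
    (hprev : ∀ m < h, T m ≤ tg m * E + g m * T (m + 1))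
    (hT : T h ≤ (if h = r then E else 0) +
      γ * ∑ l ∈ range (h + 2), (Nmax 𝒩 S l h : ℝ) * T l)
    (htg : tg h * denom 𝒩 S γ g h = (if h = r then 1 else 0) +
      γ * ∑ l ∈ range (h + 1), (Nmax 𝒩 S l h : ℝ) *
        ∑ i ∈ Ico l h, tg i * ∏ m ∈ Ico l i, g m)
    (hgh : g h * denom 𝒩 S γ g h = γ * Nmax 𝒩 S (h + 1) h) :
    T h ≤ tg h * E + g h * T (h + 1) := by
  have hunroll : ∀ l ∈ range (h + 1), T l ≤
      (∑ i ∈ Ico l h, tg i * ∏ m ∈ Ico l i, g m) * E + (∏ m ∈ Ico l h, g m) * T h := by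
    intro l hl
    have := le_sum_mul_prod_add_prod_mul_of_le_add_mul (mem_range_succ_iff.mp hl) hg hprev
    simpa only [mul_right_comm _ E, ← sum_mul] using this
  have hbelow : ∑ l ∈ range (h + 1), (Nmax 𝒩 S l h : ℝ) * T l ≤
      (∑ l ∈ range (h + 1), (Nmax 𝒩 S l h : ℝ) * ∑ i ∈ Ico l h, tg i * ∏ m ∈ Ico l i, g m) * E +
      (∑ l ∈ range (h + 1), (Nmax 𝒩 S l h : ℝ) * ∏ m ∈ Ico l h, g m) * T h := by
    rw [sum_mul, sum_mul, ← sum_add_distrib]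
    refine sum_le_sum fun l hl => ?_
    calc (Nmax 𝒩 S l h : ℝ) * T l ≤ (Nmax 𝒩 S l h : ℝ) *
          ((∑ i ∈ Ico l h, tg i * ∏ m ∈ Ico l i, g m) * E + (∏ m ∈ Ico l h, g m) * T h) := by
          gcongr; exact hunroll l hl
      _ = _ := by ring
  have hsource : (if h = r then E else 0) = (if h = r then 1 else 0) * E := by
    split_ifs <;> simp
  rw [sum_range_succ, hsource] at hT
  refine le_of_mul_le_mul_right ?_ hd
  rw [add_mul, mul_right_comm, htg, mul_right_comm, hgh]
  have hbelow' := mul_le_mul_of_nonneg_left hbelow hγ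
  simp only [denom]
  linarith

theorem stmt7_general (N : ℕ) [NeZero N]
    (𝒩 : Fin N → Finset (Fin N)) (hloop : ∀ i, i ∉ 𝒩 i)
    (S : ℕ → Finset (Fin N)) (hS0 : S 0 = {0})
    (hS : ∀ m, S (m + 1) = ((S m).biUnion 𝒩) \ ((Finset.range (m + 1)).biUnion S))
    (γ : ℝ) (hγ : 0 < γ)
    (k : Fin N) (r : ℕ) (hr : 1 ≤ r) (hk : k ∈ S r)
    (hstar : ℕ) (hhstar : S hstar = ∅)
    (hs : 0 < Nmax 𝒩 S (r + 1) r)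
    (g tg : ℕ → ℝ) (hg : gammaSpec 𝒩 S γ g)
    (htg0 : ∀ h, h < r → tg h = 0)
    (htgr : tg r = g r / (γ * (Nmax 𝒩 S (r + 1) r : ℝ)))
    (htgj : ∀ j, r < j → tg j =
      (γ * ∑ l ∈ Finset.range j, (Nmax 𝒩 S l j : ℝ) *
          ∑ i ∈ Finset.Ico (max r l) j, tg i * ∏ m ∈ Finset.Ico l i, g m) /
        denom 𝒩 S γ g j)
    (hden : ∀ h, 1 ≤ h → h < hstar → 0 < denom 𝒩 S γ g h)
    (E : ℝ)
    (C : Fin N → ℝ) (hC0 : ∀ i, 0 ≤ C i)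
    (hC : ∀ i, C i ≤ (if i = k then E else 0) + γ * ∑ j ∈ 𝒩 i, C j) :
    (∀ h, h < hstar → ∑ i ∈ S h, C i ≤
        (if r ≤ h then tg h * E else 0) + g h * ∑ i ∈ S (h + 1), C i) ∧
      C 0 ≤ (∑ j ∈ Finset.Ico r hstar, (∏ i ∈ Finset.range j, g i) * tg j) * E := by
  have hgnn : ∀ m < hstar, 0 ≤ g m := fun m hm => hg.nonneg hγ.le hden hm
  have hk0 : k ≠ 0 := fun hk0 => by
    have : r = 0 := ((mem_sphere_iff_eq hS hk).mp (by simp [hS0, hk0])).symm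
    omega
  have key : ∀ h < hstar, ∑ i ∈ S h, C i ≤ tg h * E + g h * ∑ i ∈ S (h + 1), C i := by
    intro h
    induction h using Nat.strong_induction_on with
    | _ h ih =>
      intro hh
      rcases Nat.eq_zero_or_pos h with rfl | h1
      · simpa [hS0, sphere_one_eq hS0 hS (hloop 0), hk0.symm, htg0 0 hr, hg.1] using hC 0
      · have hd := hden h h1 hh
        exact le_tg_mul_add_g_mul_of_forall_lt hγ.le hd (fun m hm => hgnn m (by omega))
          (fun m hm => ih m hm (by omega)) (sum_sphere_le_s7 hS hγ.le hk hC0 hC h)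
          (tg_mul_denom hg hγ.ne' hr hs htg0 htgr htgj hd.ne') (hg.mul_denom h1 hd.ne')
  refine ⟨fun h hh => ?_, ?_⟩
  · split_ifs with hrh
    · exact key h hh
    · simpa [htg0 h (not_le.mp hrh)] using key h hh
  · have := le_sum_mul_prod_add_prod_mul_of_le_add_mul (Nat.zero_le hstar) hgnn key
    simp only [hS0, hhstar, sum_singleton, sum_empty, mul_zero, add_zero] at this
    refine this.trans_eq ?_
    rw [sum_mul, ← sum_subset (Ico_subset_Ico_left (Nat.zero_le r))]
    · refine sum_congr rfl fun i _ => ?_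
      rw [range_eq_Ico]
      ring
    · intro i hi hir
      rw [htg0 i (by grind), zero_mul, zero_mul]

/-- **Core of the proof of Lemma 5.2** (one-step bounds with a source term).
The graph is on the finite vertex set `Fin N` with distinguished vertex `0` and
distance spheres `S`; `h*` is the least `h` with `S h = ∅`; `k ∼ᵣ 0` with
`r ≥ 1`, `S (r+1) ≠ ∅` and `s := max_{j ∈ 𝒩₀^(r+1)} N_j^r > 0`.  Given the
coefficients `γ_h` and the modified coefficients `γ̃_h` (namely `γ̃_h = 0` for
`h < r`, `γ̃_r = γ_r/(γ·s)`, and for `j > r`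
`γ̃_j = [γ·∑_{ℓ<j} (max_{k ∈ 𝒩₀^(ℓ)} N_k^j)·∑_{i=max(r,ℓ)}^{j−1} γ̃_i·∏_{h=ℓ}^{i−1} γ_h] / [1 − γ·∑_{i≤j} (max_{k ∈ 𝒩₀^(i)} N_k^j)·∏_{h=i}^{j−1} γ_h]`),
with all relevant denominators positive, and nonnegative `(Cⁱ)` with
`Cⁱ ≤ E·𝟙_{i=k} + γ·∑_{j∈𝒩 i} Cʲ` for all `i`, one has, for every `h < h*`,
`∑_{i ∼ₕ 0} Cⁱ ≤ γ̃_h·E·𝟙_{h ≥ r} + γ_h·∑_{i ∼_{h+1} 0} Cⁱ`, and consequently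
`C⁰ ≤ (∑_{j=r}^{h*−1} (∏_{i=0}^{j−1} γ_i)·γ̃_j)·E`. -/
theorem stmt7 (N : ℕ) [NeZero N]
    (𝒩 : Fin N → Finset (Fin N)) (hloop : ∀ i, i ∉ 𝒩 i)
    (S : ℕ → Finset (Fin N)) (hS0 : S 0 = {0})
    (hS : ∀ m, S (m + 1) = ((S m).biUnion 𝒩) \ ((Finset.range (m + 1)).biUnion S))
    (γ : ℝ) (hγ : 0 < γ)
    (k : Fin N) (r : ℕ) (hr : 1 ≤ r) (hk : k ∈ S r)
    (hstar : ℕ) (hhstar : S hstar = ∅) (hminimal : ∀ h, h < hstar → (S h).Nonempty)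
    (hSr1 : (S (r + 1)).Nonempty) (hs : 0 < Nmax 𝒩 S (r + 1) r)
    (g tg : ℕ → ℝ) (hg : gammaSpec 𝒩 S γ g)
    (htg0 : ∀ h, h < r → tg h = 0)
    (htgr : tg r = g r / (γ * (Nmax 𝒩 S (r + 1) r : ℝ)))
    (htgj : ∀ j, r < j → tg j =
      (γ * ∑ l ∈ Finset.range j, (Nmax 𝒩 S l j : ℝ) *
          ∑ i ∈ Finset.Ico (max r l) j, tg i * ∏ m ∈ Finset.Ico l i, g m) /
        denom 𝒩 S γ g j)
    (hden : ∀ h, 1 ≤ h → h < hstar → 0 < denom 𝒩 S γ g h)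
    (E : ℝ) (hE : 0 ≤ E)
    (C : Fin N → ℝ) (hC0 : ∀ i, 0 ≤ C i)
    (hC : ∀ i, C i ≤ (if i = k then E else 0) + γ * ∑ j ∈ 𝒩 i, C j) :
    (∀ h, h < hstar → ∑ i ∈ S h, C i ≤
        (if r ≤ h then tg h * E else 0) + g h * ∑ i ∈ S (h + 1), C i) ∧
      C 0 ≤ (∑ j ∈ Finset.Ico r hstar, (∏ i ∈ Finset.range j, g i) * tg j) * E :=
  stmt7_general N 𝒩 hloop S hS0 hS γ hγ k r hr hk hstar hhstar hs g tg hg htg0 htgr htgj hden E C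
    hC0 hC
end

section
/- Proposition (geometric growth bound for the modified coefficients, from the proof of Lemma 5.2). Let r ∈ ℕ, K′ > 0 and γ̄ ∈ (0, 1/4]. Let (t_j)_{j ≥ r} be nonnegative reals such that t_r ≤ K′ and, for every j > r, t_j ≤ ∑_{ℓ=0}^{j−1} ∑_{i=max(r,ℓ)}^{j−1} t_i · γ̄^{i−ℓ+1}. Then t_j ≤ K′·(2γ̄)^{−(j−r)} for every j ≥ r, and consequently ∑_{j=r}^{J} γ̄^j · t_j ≤ 2·K′·γ̄^r for every J ≥ r. -/
/-- **Geometric growth bound for the modified coefficients** (from the proof of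
Lemma 5.2).  Let `r ∈ ℕ`, `K' > 0` and `γ̄ ∈ (0, 1/4]`, and let `(t_j)_{j≥r}` be
nonnegative with `t_r ≤ K'` and, for `j > r`,
`t_j ≤ ∑_{ℓ=0}^{j−1} ∑_{i=max(r,ℓ)}^{j−1} t_i·γ̄^{i−ℓ+1}`.  Then
`t_j ≤ K'·(2γ̄)^{−(j−r)}` for every `j ≥ r`, and consequently
`∑_{j=r}^{J} γ̄^j·t_j ≤ 2·K'·γ̄^r` for every `J ≥ r`. -/
theorem stmt8 (r : ℕ) (K' γbar : ℝ) (hK' : 0 < K')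
    (hγ0 : 0 < γbar) (hγ4 : γbar ≤ 1 / 4)
    (t : ℕ → ℝ) (ht0 : ∀ j, r ≤ j → 0 ≤ t j) (htr : t r ≤ K')
    (hrec : ∀ j, r < j →
      t j ≤ ∑ l ∈ Finset.range j, ∑ i ∈ Finset.Ico (max r l) j,
        t i * γbar ^ (i - l + 1)) :
    (∀ j, r ≤ j → t j ≤ K' * ((2 * γbar)⁻¹) ^ (j - r)) ∧
      ∀ J, r ≤ J → ∑ j ∈ Finset.Icc r J, γbar ^ j * t j ≤ 2 * K' * γbar ^ r := by
  set M : ℝ := (2 * γbar)⁻¹ with hMdef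
  have hM0 : 0 < M := by positivity
  have hM2 : (2:ℝ) ≤ M := by
    rw [hMdef]
    rw [le_inv_comm₀ (by norm_num) (by positivity)]
    linarith
  have hhalf : γbar * M = 1 / 2 := by
    rw [hMdef]
    field_simp
  -- bound on partial geometric sums of γbar
  have hgeo : ∀ n : ℕ, ∑ l ∈ Finset.range n, γbar ^ l ≤ 4 / 3 := by
    intro n
    have h := geom_sum_mul γbar n
    have hpn : (0:ℝ) ≤ γbar ^ n := by positivity
    nlinarith [h, hpn]
  -- Part 1, by strong induction
  have key : ∀ j, r ≤ j → t j ≤ K' * M ^ (j - r) := by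
    intro j
    induction j using Nat.strong_induction_on with
    | _ j ih =>
      intro hrj
      rcases eq_or_lt_of_le hrj with h | h
      · subst h; simpa using htr
      · -- step 1: apply the recursion and the induction hypothesis
        have step1 : t j ≤ ∑ l ∈ Finset.range j, ∑ i ∈ Finset.Ico (max r l) j,
            (K' * M ^ (i - r)) * γbar ^ (i - l + 1) := by
          refine (hrec j h).trans ?_
          refine Finset.sum_le_sum fun l _ => Finset.sum_le_sum fun i hi => ?_
          rw [Finset.mem_Ico] at hi
          have hri : r ≤ i := le_trans (le_max_left r l) hi.1
          exact mul_le_mul_of_nonneg_right (ih i hi.2 hri) (by positivity)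
        -- step 2: swap the order of summation
        have step2 : ∑ l ∈ Finset.range j, ∑ i ∈ Finset.Ico (max r l) j,
            (K' * M ^ (i - r)) * γbar ^ (i - l + 1)
            = ∑ i ∈ Finset.Ico r j, ∑ l ∈ Finset.range (i + 1),
            (K' * M ^ (i - r)) * γbar ^ (i - l + 1) := by
          refine Finset.sum_comm' ?_
          intro l i
          simp only [Finset.mem_range, Finset.mem_Ico]
          omega
        -- step 3: evaluate/bound each inner sum
        have step3 : ∀ i : ℕ, ∑ l ∈ Finset.range (i + 1),
            (K' * M ^ (i - r)) * γbar ^ (i - l + 1)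
            ≤ (K' * M ^ (i - r)) * (γbar * (4 / 3)) := by
          intro i
          rw [← Finset.mul_sum]
          have hrefl : ∑ l ∈ Finset.range (i + 1), γbar ^ (i - l + 1)
              = ∑ l ∈ Finset.range (i + 1), γbar ^ (l + 1) := by
            rw [← Finset.sum_range_reflect (fun l => γbar ^ (l + 1)) (i + 1)]
            refine Finset.sum_congr rfl fun l hl => ?_
            rw [Finset.mem_range] at hl
            congr 1
          have hsum : ∑ l ∈ Finset.range (i + 1), γbar ^ (i - l + 1)
              ≤ γbar * (4 / 3) := by
            rw [hrefl]
            have : ∑ l ∈ Finset.range (i + 1), γbar ^ (l + 1)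
                = γbar * ∑ l ∈ Finset.range (i + 1), γbar ^ l := by
              rw [Finset.mul_sum]
              exact Finset.sum_congr rfl fun l _ => by ring
            rw [this]
            exact mul_le_mul_of_nonneg_left (hgeo (i + 1)) hγ0.le
          exact mul_le_mul_of_nonneg_left hsum (by positivity)
        -- step 4: geometric sum of powers of M
        set n : ℕ := j - r with hn
        have hn1 : 1 ≤ n := by omega
        have hS : ∑ i ∈ Finset.Ico r j, M ^ (i - r) = ∑ k ∈ Finset.range n, M ^ k := by
          rw [Finset.sum_Ico_eq_sum_range]
          exact Finset.sum_congr rfl fun k _ => by congr 1; omega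
        have hSmul := geom_sum_mul M n
        have hS0 : (0:ℝ) ≤ ∑ k ∈ Finset.range n, M ^ k :=
          Finset.sum_nonneg fun k _ => by positivity
        have hSle : ∑ k ∈ Finset.range n, M ^ k ≤ M ^ n := by
          nlinarith [hSmul, hS0, one_le_pow₀ (by linarith : (1:ℝ) ≤ M) (n := n)]
        -- put everything together
        have chain : t j ≤ (K' * (γbar * (4 / 3))) * ∑ k ∈ Finset.range n, M ^ k := by
          calc t j ≤ ∑ i ∈ Finset.Ico r j, ∑ l ∈ Finset.range (i + 1),
                (K' * M ^ (i - r)) * γbar ^ (i - l + 1) := by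
                rw [← step2]; exact step1
            _ ≤ ∑ i ∈ Finset.Ico r j, (K' * M ^ (i - r)) * (γbar * (4 / 3)) :=
                Finset.sum_le_sum fun i _ => step3 i
            _ = (K' * (γbar * (4 / 3))) * ∑ i ∈ Finset.Ico r j, M ^ (i - r) := by
                rw [Finset.mul_sum]; exact Finset.sum_congr rfl fun i _ => by ring
            _ = (K' * (γbar * (4 / 3))) * ∑ k ∈ Finset.range n, M ^ k := by rw [hS]
        have hfac : (0:ℝ) ≤ (1/3 - γbar * (4/3)) * (K' * ∑ k ∈ Finset.range n, M ^ k) :=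
          mul_nonneg (by linarith) (mul_nonneg hK'.le hS0)
        nlinarith [chain, hfac, mul_le_mul_of_nonneg_left hSle hK'.le,
          mul_nonneg hK'.le hS0]
  refine ⟨key, ?_⟩
  -- Part 2
  intro J hJ
  have hgeo2 : ∀ n : ℕ, ∑ k ∈ Finset.range n, ((1:ℝ) / 2) ^ k ≤ 2 := by
    intro n
    have h := geom_sum_mul ((1:ℝ) / 2) n
    have : (0:ℝ) ≤ ((1:ℝ)/2) ^ n := by positivity
    nlinarith
  calc ∑ j ∈ Finset.Icc r J, γbar ^ j * t j
      ≤ ∑ j ∈ Finset.Icc r J, γbar ^ j * (K' * M ^ (j - r)) := by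
        refine Finset.sum_le_sum fun j hj => ?_
        rw [Finset.mem_Icc] at hj
        exact mul_le_mul_of_nonneg_left (key j hj.1) (by positivity)
    _ = ∑ j ∈ Finset.Icc r J, (K' * γbar ^ r) * ((1:ℝ)/2) ^ (j - r) := by
        refine Finset.sum_congr rfl fun j hj => ?_
        rw [Finset.mem_Icc] at hj
        obtain ⟨d, hd⟩ : ∃ d, j = r + d := ⟨j - r, by omega⟩
        subst hd
        simp only [Nat.add_sub_cancel_left]
        have h2 : γbar ^ d * M ^ d = ((1:ℝ)/2) ^ d := by rw [← mul_pow, hhalf]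
        calc γbar ^ (r + d) * (K' * M ^ d)
            = (K' * γbar ^ r) * (γbar ^ d * M ^ d) := by rw [pow_add]; ring
          _ = (K' * γbar ^ r) * ((1:ℝ)/2) ^ d := by rw [h2]
    _ = (K' * γbar ^ r) * ∑ k ∈ Finset.range (J + 1 - r), ((1:ℝ)/2) ^ k := by
        rw [← Finset.mul_sum, ← Finset.Ico_add_one_right_eq_Icc, Finset.sum_Ico_eq_sum_range]
        congr 1
        exact Finset.sum_congr rfl fun k _ => by congr 1; omega
    _ ≤ (K' * γbar ^ r) * 2 := by
        exact mul_le_mul_of_nonneg_left (hgeo2 _) (by positivity)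
    _ = 2 * K' * γbar ^ r := by ring
end

section
/- Proposition (strong displacement monotonicity of the chain-interaction cost, Example 3.1). Let d ≥ 1, let φ : ℝ^d → ℝ be twice continuously differentiable with λ‖v‖² ≤ ⟨D²φ(x) v, v⟩ ≤ Λ‖v‖² for all x, v ∈ ℝ^d, where 0 < λ ≤ Λ, and let μ ∈ (0,1). Then for all vectors a, a′, b₁, b₁′, b₂, b₂′ ∈ ℝ^d one has ⟨∇φ(a − μ b₁) − ∇φ(a′ − μ b₁′), a − a′⟩ + ⟨∇φ(a − μ b₂) − ∇φ(a′ − μ b₂′), a − a′⟩ ≥ λ‖a − a′‖² − (μΛ/2)·(‖b₁ − b₁′‖² + ‖b₂ − b₂′‖²). (This says that on the chain graph, the cost f^i(x) = ∑_{j ∼ i} φ(x^i − μ x^j), whose neighbours are j = i−1 and j = i+1, satisfies Assumption (c) of the paper with constants K_f^i = λ and ℓ_f^i = μΛ/2, the left-hand side being ⟨D_i f^i(x) − D_i f^i(y), x^i − y^i⟩ with a = x^i, a′ = y^i, b₁ = x^{i−1}, b₂ = x^{i+1}, etc.) -/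
/-!
By the mean value theorem applied to `x ↦ Dφ(x) e` with `e = a - a'`, each summand equals
`D²φ(x)(e - μδ, e)` at some point `x`, where `δ = b - b'`. For the symmetric positive semidefinite
form `B = D²φ(x)` one has `2 B(δ, e) ≤ B(δ, δ) + B(e, e)`, hence
`B(e - μδ, e) ≥ (1 - μ/2) B(e, e) - (μ/2) B(δ, δ) ≥ (λ/2)‖e‖² - (μΛ/2)‖δ‖²`;
adding the two neighbours gives the claim.
-/

open scoped RealInnerProductSpace

section

variable {E : Type*} [NormedAddCommGroup E] [NormedSpace ℝ E]

lemma le_fderiv_sub_of_le_fderiv_fderiv {f : E → ℝ}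
    (hf : Differentiable ℝ (fderiv ℝ f)) {p q e : E} {c : ℝ}
    (hc : ∀ x ∈ segment ℝ q p, c ≤ fderiv ℝ (fderiv ℝ f) x (p - q) e) :
    c ≤ fderiv ℝ f p e - fderiv ℝ f q e := by
  have hderiv (x : E) : HasFDerivAt (fun y => fderiv ℝ f y e)
      ((fderiv ℝ (fderiv ℝ f) x).flip e) x :=
    (hf x).hasFDerivAt.clm_apply (hasFDerivAt_const e x) |>.congr_fderiv (by ext; simp)
  obtain ⟨x, hx, hmvt⟩ := domain_mvt (fun x _ => (hderiv x).hasFDerivWithinAt) convex_univ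
    (Set.mem_univ q) (Set.mem_univ p)
  rw [hmvt]
  exact hc x hx

lemma two_mul_le_add_of_symm_of_nonneg (B : E →L[ℝ] E →L[ℝ] ℝ)
    (hsymm : ∀ v w, B v w = B w v) (hpos : ∀ v, 0 ≤ B v v) (v w : E) :
    2 * B v w ≤ B v v + B w w := by
  have := hpos (v - w)
  simp only [map_sub, sub_apply] at this
  linarith [hsymm v w]

lemma half_mul_sub_le_apply_sub_smul (B : E →L[ℝ] E →L[ℝ] ℝ)
    (hsymm : ∀ v w, B v w = B w v) {lam Lam μ : ℝ} (hlam : 0 ≤ lam) (hμ0 : 0 ≤ μ) (hμ1 : μ ≤ 1)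
    (hB : ∀ v, lam * ‖v‖ ^ 2 ≤ B v v ∧ B v v ≤ Lam * ‖v‖ ^ 2) (e δ : E) :
    lam / 2 * ‖e‖ ^ 2 - μ * Lam / 2 * ‖δ‖ ^ 2 ≤ B (e - μ • δ) e := by
  have hcross := two_mul_le_add_of_symm_of_nonneg B hsymm
    (fun v => (mul_nonneg hlam (sq_nonneg ‖v‖)).trans (hB v).1) δ e
  have he := (hB e).1
  have hδ := (hB δ).2
  have hexpand : B (e - μ • δ) e = B e e - μ * B δ e := by simp
  rw [hexpand]
  nlinarith [mul_le_mul_of_nonneg_left hcross hμ0, mul_le_mul_of_nonneg_left hδ hμ0,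
    mul_nonneg (sub_nonneg.2 hμ1) (mul_nonneg hlam (sq_nonneg ‖e‖))]

end

lemma le_inner_gradient_sub_smul_sub {E : Type*} [NormedAddCommGroup E] [InnerProductSpace ℝ E]
    [CompleteSpace E] {φ : E → ℝ} (hφ : ContDiff ℝ 2 φ) {lam Lam μ : ℝ} (hlam : 0 ≤ lam)
    (hμ0 : 0 ≤ μ) (hμ1 : μ ≤ 1)
    (hHess : ∀ x v : E, lam * ‖v‖ ^ 2 ≤ iteratedFDeriv ℝ 2 φ x ![v, v] ∧
      iteratedFDeriv ℝ 2 φ x ![v, v] ≤ Lam * ‖v‖ ^ 2) (a a' b b' : E) :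
    lam / 2 * ‖a - a'‖ ^ 2 - μ * Lam / 2 * ‖b - b'‖ ^ 2 ≤
      ⟪gradient φ (a - μ • b) - gradient φ (a' - μ • b'), a - a'⟫ := by
  have hdisp : (a - μ • b) - (a' - μ • b') = (a - a') - μ • (b - b') := by
    rw [smul_sub]; abel
  rw [inner_sub_left, inner_gradient_left, inner_gradient_left]
  refine le_fderiv_sub_of_le_fderiv_fderiv ((hφ.fderiv_right le_rfl).differentiable one_ne_zero)
    fun x _ => ?_
  rw [hdisp]
  refine half_mul_sub_le_apply_sub_smul _ (hφ.contDiffAt.isSymmSndFDerivAt (by simp))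
    hlam hμ0 hμ1 (fun v => ?_) _ _
  simpa only [iteratedFDeriv_two_apply, Matrix.cons_val_zero, Matrix.cons_val_one] using hHess x v

theorem stmt14_general (d : ℕ)
    (φ : EuclideanSpace ℝ (Fin d) → ℝ)
    (lam Lam μ : ℝ) (hlam : 0 < lam)
    (hμ : μ ∈ Set.Ioo (0 : ℝ) 1)
    (hφ : ContDiff ℝ 2 φ)
    (hHess : ∀ x v : EuclideanSpace ℝ (Fin d),
      lam * ‖v‖ ^ 2 ≤ iteratedFDeriv ℝ 2 φ x ![v, v] ∧
        iteratedFDeriv ℝ 2 φ x ![v, v] ≤ Lam * ‖v‖ ^ 2) :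
    ∀ a a' b₁ b₁' b₂ b₂' : EuclideanSpace ℝ (Fin d),
      lam * ‖a - a'‖ ^ 2 - μ * Lam / 2 * (‖b₁ - b₁'‖ ^ 2 + ‖b₂ - b₂'‖ ^ 2) ≤
        ⟪gradient φ (a - μ • b₁) - gradient φ (a' - μ • b₁'), a - a'⟫ +
          ⟪gradient φ (a - μ • b₂) - gradient φ (a' - μ • b₂'), a - a'⟫ := by
  intro a a' b₁ b₁' b₂ b₂'
  have neighbour := le_inner_gradient_sub_smul_sub hφ hlam.le hμ.1.le hμ.2.le hHess a a'
  linarith [neighbour b₁ b₁', neighbour b₂ b₂']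

/-- **Strong displacement monotonicity of the chain-interaction cost**
(Example 3.1).  Let `φ : ℝ^d → ℝ` be `C²` with `λ‖v‖² ≤ ⟨D²φ(x)v, v⟩ ≤ Λ‖v‖²`
for all `x, v`, where `0 < λ ≤ Λ`, and let `μ ∈ (0,1)`.  Then for all
`a, a', b₁, b₁', b₂, b₂' ∈ ℝ^d`,
`⟨∇φ(a − μb₁) − ∇φ(a' − μb₁'), a − a'⟩ + ⟨∇φ(a − μb₂) − ∇φ(a' − μb₂'), a − a'⟩
  ≥ λ‖a − a'‖² − (μΛ/2)(‖b₁ − b₁'‖² + ‖b₂ − b₂'‖²)`. -/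
theorem stmt14 (d : ℕ) (hd : 1 ≤ d)
    (φ : EuclideanSpace ℝ (Fin d) → ℝ)
    (lam Lam μ : ℝ) (hlam : 0 < lam) (hlL : lam ≤ Lam)
    (hμ : μ ∈ Set.Ioo (0 : ℝ) 1)
    (hφ : ContDiff ℝ 2 φ)
    (hHess : ∀ x v : EuclideanSpace ℝ (Fin d),
      lam * ‖v‖ ^ 2 ≤ iteratedFDeriv ℝ 2 φ x ![v, v] ∧
        iteratedFDeriv ℝ 2 φ x ![v, v] ≤ Lam * ‖v‖ ^ 2) :
    ∀ a a' b₁ b₁' b₂ b₂' : EuclideanSpace ℝ (Fin d),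
      lam * ‖a - a'‖ ^ 2 - μ * Lam / 2 * (‖b₁ - b₁'‖ ^ 2 + ‖b₂ - b₂'‖ ^ 2) ≤
        ⟪gradient φ (a - μ • b₁) - gradient φ (a' - μ • b₁'), a - a'⟫ +
          ⟪gradient φ (a - μ • b₂) - gradient φ (a' - μ • b₂'), a - a'⟫ :=
  stmt14_general d φ lam Lam μ hlam hμ hφ hHess
end
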